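/- arXiv:2307.00839 — 6 statements merged into one kernel-verified Lean document; each statement's English description precedes it below -/
import Mathlib

section
/- Let a, b, c > 0 and let I ⊆ ℝ be a Lebesgue-measurable set such that for all t₁, t₂ ∈ I one has a·|t₂ − t₁|² − b·|t₂ − t₁| + c ≥ 0. Then for every τ ≥ b/(2a), the Lebesgue measure of I ∩ [0, τ] satisfies |I ∩ [0, τ]| ≤ (8ac/b²)·τ. -/
set_option maxHeartbeats 800000


open MeasureTheory

theorem stmt_0 (a b c : ℝ) (ha : 0 < a) (hb : 0 < b) (hc : 0 < c)
    (I : Set ℝ) (hI : MeasurableSet I)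
    (h : ∀ t₁ ∈ I, ∀ t₂ ∈ I, a * |t₂ - t₁| ^ 2 - b * |t₂ - t₁| + c ≥ 0)
    (τ : ℝ) (hτ : τ ≥ b / (2 * a)) :
    (volume (I ∩ Set.Icc 0 τ)).toReal ≤ 8 * a * c / b ^ 2 * τ := by
  have hτ0 : 0 ≤ τ := le_trans (by positivity) hτ
  have hbτ : b ≤ 2 * a * τ := by
    rw [ge_iff_le, div_le_iff₀ (by positivity)] at hτ; linarith
  by_cases hD : b ^ 2 ≤ 4 * a * c
  · -- trivial case
    have h2 : volume (Set.Icc (0:ℝ) τ) = ENNReal.ofReal τ := by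
      rw [Real.volume_Icc]; ring_nf
    have h1 : (volume (I ∩ Set.Icc 0 τ)).toReal ≤ τ := by
      have hm : volume (I ∩ Set.Icc 0 τ) ≤ volume (Set.Icc (0:ℝ) τ) :=
        measure_mono Set.inter_subset_right
      calc (volume (I ∩ Set.Icc 0 τ)).toReal ≤ (volume (Set.Icc (0:ℝ) τ)).toReal := by
            apply ENNReal.toReal_mono _ hm
            rw [h2]; exact ENNReal.ofReal_ne_top
        _ = τ := by rw [h2, ENNReal.toReal_ofReal hτ0]
    have h3 : (2:ℝ) ≤ 8 * a * c / b ^ 2 := by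
      rw [le_div_iff₀ (by positivity)]; nlinarith
    nlinarith
  · push_neg at hD
    have hD0 : 0 < b ^ 2 - 4 * a * c := by linarith
    set s := Real.sqrt (b ^ 2 - 4 * a * c) with hs
    have hs2 : s ^ 2 = b ^ 2 - 4 * a * c := Real.sq_sqrt hD0.le
    have hs0 : 0 < s := Real.sqrt_pos.2 hD0
    have hsb : s < b := by nlinarith
    clear_value s
    set r₁ := (b - s) / (2 * a) with hr1
    set r₂ := (b + s) / (2 * a) with hr2
    have hr10 : 0 < r₁ := by apply div_pos; linarith; linarith
    have hr20 : 0 < r₂ := by apply div_pos; linarith; linarith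
    -- quadratic fact
    have hquad : ∀ d : ℝ, 0 ≤ d → a * d ^ 2 - b * d + c ≥ 0 → d < r₂ → d ≤ r₁ := by
      intro d hd0 hdq hdlt
      by_contra hcon
      push_neg at hcon
      have h1 : 2 * a * d - b < s := by
        rw [hr2, lt_div_iff₀ (by positivity)] at hdlt; linarith
      have h2 : -s < 2 * a * d - b := by
        rw [hr1, div_lt_iff₀ (by positivity)] at hcon; linarith
      have := mul_pos (show 0 < s - (2 * a * d - b) by linarith)
        (show 0 < s + (2 * a * d - b) by linarith)
      nlinarith
    -- window lemma
    have hwin : ∀ x : ℝ, volume (I ∩ Set.Ico x (x + r₂)) ≤ ENNReal.ofReal r₁ := by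
      intro x
      rcases Set.eq_empty_or_nonempty (I ∩ Set.Ico x (x + r₂)) with he | hne
      · simp [he]
      · set S := I ∩ Set.Ico x (x + r₂) with hS
        have hbdd : BddBelow S := ⟨x, fun t ht => ht.2.1⟩
        have hsub : S ⊆ Set.Icc (sInf S) (sInf S + r₁) := by
          intro t ht
          refine ⟨csInf_le hbdd ht, ?_⟩
          have hlb : t - r₁ ≤ sInf S := by
            apply le_csInf hne
            intro t' ht'
            have hd := h t' ht'.1 t ht.1
            have habs : |t - t'| < r₂ := by
              rw [abs_lt]
              exact ⟨by linarith [ht.2.1, ht'.2.2], by linarith [ht'.2.1, ht.2.2]⟩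
            have hle := hquad |t - t'| (abs_nonneg _) hd habs
            have := abs_le.1 hle
            linarith [this.1]
          linarith
        calc volume S ≤ volume (Set.Icc (sInf S) (sInf S + r₁)) := measure_mono hsub
          _ = ENNReal.ofReal r₁ := by rw [Real.volume_Icc]; ring_nf
    set n := Nat.floor (τ / r₂) + 1 with hn
    -- covering
    have hcov : I ∩ Set.Icc 0 τ ⊆
        ⋃ k ∈ Finset.range n, I ∩ Set.Ico ((k : ℝ) * r₂) ((k : ℝ) * r₂ + r₂) := by
      rintro t ⟨htI, ht0, htτ⟩
      have hk1 : (⌊t / r₂⌋₊ : ℝ) ≤ t / r₂ := Nat.floor_le (div_nonneg ht0 hr20.le)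
      have hk2 : t / r₂ < (⌊t / r₂⌋₊ : ℝ) + 1 := Nat.lt_floor_add_one _
      refine Set.mem_iUnion₂.2 ⟨⌊t / r₂⌋₊, ?_, htI, ?_, ?_⟩
      · rw [Finset.mem_range, hn]
        exact Nat.succ_le_succ (Nat.floor_le_floor (by gcongr))
      · calc (⌊t / r₂⌋₊ : ℝ) * r₂ ≤ (t / r₂) * r₂ := by
              exact mul_le_mul_of_nonneg_right hk1 hr20.le
          _ = t := by field_simp
      · have ht' : t / r₂ * r₂ = t := div_mul_cancel₀ t hr20.ne'
        nlinarith [mul_lt_mul_of_pos_right hk2 hr20]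
    have hmeas : volume (I ∩ Set.Icc 0 τ) ≤ ENNReal.ofReal ((n : ℝ) * r₁) := by
      calc volume (I ∩ Set.Icc 0 τ)
          ≤ volume (⋃ k ∈ Finset.range n, I ∩ Set.Ico ((k : ℝ) * r₂) ((k : ℝ) * r₂ + r₂)) :=
            measure_mono hcov
        _ ≤ ∑ k ∈ Finset.range n, volume (I ∩ Set.Ico ((k : ℝ) * r₂) ((k : ℝ) * r₂ + r₂)) :=
            measure_biUnion_finset_le _ _
        _ ≤ ∑ k ∈ Finset.range n, ENNReal.ofReal r₁ :=
            Finset.sum_le_sum fun k _ => hwin _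
        _ = (n : ENNReal) * ENNReal.ofReal r₁ := by
            simp [Finset.sum_const, nsmul_eq_mul]
        _ = ENNReal.ofReal ((n : ℝ) * r₁) := by
            rw [ENNReal.ofReal_mul (by positivity), ENNReal.ofReal_natCast]
    have htr : (volume (I ∩ Set.Icc 0 τ)).toReal ≤ (n : ℝ) * r₁ :=
      ENNReal.toReal_le_of_le_ofReal (by positivity) hmeas
    -- arithmetic
    have hnle : (n : ℝ) ≤ τ / r₂ + 1 := by
      rw [hn]
      push_cast
      have := Nat.floor_le (div_nonneg hτ0 hr20.le)
      linarith
    have e1 : 2 * a * r₁ = b - s := by rw [hr1]; field_simp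
    have e2 : 2 * a * r₂ = b + s := by rw [hr2]; field_simp
    have hkey : r₁ * b ^ 2 ≤ 4 * a * c * r₂ := by
      have hq : 0 ≤ b ^ 2 + 4 * a * c - s * b := by nlinarith
      nlinarith [mul_nonneg hs0.le hq]
    have hratio : r₁ / r₂ ≤ 4 * a * c / b ^ 2 := by
      rw [div_le_div_iff₀ hr20 (by positivity)]
      linarith
    have hA : τ / r₂ * r₁ ≤ 4 * a * c / b ^ 2 * τ := by
      have h1 : τ / r₂ * r₁ = τ * (r₁ / r₂) := by ring
      rw [h1]
      calc τ * (r₁ / r₂) ≤ τ * (4 * a * c / b ^ 2) :=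
            mul_le_mul_of_nonneg_left hratio hτ0
        _ = 4 * a * c / b ^ 2 * τ := by ring
    have hB : r₁ ≤ 4 * a * c / b ^ 2 * τ := by
      have hr1le : r₁ ≤ 2 * c / b := by
        rw [hr1, div_le_div_iff₀ (by positivity) hb]
        nlinarith [mul_lt_mul_of_pos_left hsb hs0]
      have h3 : (1:ℝ) ≤ 2 * a * τ / b := by
        rw [le_div_iff₀ hb]; linarith
      have h2 : 2 * c / b ≤ 4 * a * c / b ^ 2 * τ := by
        calc 2 * c / b = 2 * c / b * 1 := by ring
          _ ≤ 2 * c / b * (2 * a * τ / b) :=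
              mul_le_mul_of_nonneg_left h3 (by positivity)
          _ = 4 * a * c / b ^ 2 * τ := by field_simp; ring
      linarith
    have hfin : (n : ℝ) * r₁ ≤ 8 * a * c / b ^ 2 * τ := by
      calc (n : ℝ) * r₁ ≤ (τ / r₂ + 1) * r₁ := mul_le_mul_of_nonneg_right hnle hr10.le
        _ = τ / r₂ * r₁ + r₁ := by ring
        _ ≤ 4 * a * c / b ^ 2 * τ + 4 * a * c / b ^ 2 * τ := add_le_add hA hB
        _ = 8 * a * c / b ^ 2 * τ := by ring
    linarith
end

section
/- Fix n₁, n₂ > 0 and let p₁, p₂ ∈ S^{n₁,n₂} be elliptic symbols in S^{n₁,n₂} having the same principal symbol. Let n₊ = max(n₁, n₂). Then there exists a constant C > 0 such that |φ₂^t(ρ) − φ₁^t(ρ)| ≤ exp(C·t·⟨p₁(ρ)⟩^{max(0, 1 − 2/n₊)}) for all ρ ∈ ℝ^{2d} and all t ≥ 0, where ⟨y⟩ = (1+|y|²)^{1/2}. In particular, when n₁, n₂ ≤ 2, there exists C > 0 with |φ₂^t(ρ) − φ₁^t(ρ)| ≤ e^{Ct} for all ρ ∈ ℝ^{2d} and t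 ≥ 0. -/
/-!
Both Hamiltonians are conserved along their flows, and ellipticity bounds the weight
`⟨x⟩^{n₁} + ⟨ξ⟩^{n₂}` by a multiple of `⟨p⟩`; since `p₂ - p₁` is of lower order, `⟨p₂⟩ ≲ ⟨p₁⟩`,
so both trajectories starting at `ρ` (and the segments joining them) stay where the weight is
`≲ E := ⟨p₁(ρ)⟩`. There the gap between the Hamiltonian vector fields is at most
`|∇(p₂ - p₁)(φ₂ᵗ)| + sup |∇²p₁| · |φ₂ᵗ - φ₁ᵗ|`, and both symbol bounds are controlled by
`⟨x⟩^{n₁-2} + ⟨ξ⟩^{n₂-2} ≲ E^θ` with `θ = max(0, 1 - 2/n₊)`, by interpolating `⟨x⟩^{n-2}`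
between `⟨x⟩^n ≲ E` and `1`. Grönwall's inequality gives `|φ₂ᵗ - φ₁ᵗ| ≤ exp(C t E^θ) - 1`.
-/

noncomputable section

/-- The phase space `ℝ^{2d} ≃ ℝ^d_x × ℝ^d_ξ`, as a Euclidean space indexed by `Fin d ⊕ Fin d`. -/
abbrev PhaseSpace (d : ℕ) := EuclideanSpace ℝ (Fin d ⊕ Fin d)

/-- The position component `x` of a phase space point `ρ = (x, ξ)`. -/
def posPart {d : ℕ} (ρ : PhaseSpace d) : EuclideanSpace ℝ (Fin d) :=
  WithLp.toLp 2 (fun i => ρ (Sum.inl i))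

/-- The momentum component `ξ` of a phase space point `ρ = (x, ξ)`. -/
def momPart {d : ℕ} (ρ : PhaseSpace d) : EuclideanSpace ℝ (Fin d) :=
  WithLp.toLp 2 (fun i => ρ (Sum.inr i))

/-- The Japanese bracket `⟨x⟩ = (1 + |x|²)^{1/2}`. -/
def jap {E : Type*} [NormedAddCommGroup E] (x : E) : ℝ := Real.sqrt (1 + ‖x‖ ^ 2)

/-- Membership in the symbol class `S^{n₁,n₂}`: `a` is smooth and for every derivative
order `k`, `‖D^k a(x,ξ)‖ ≤ C (⟨x⟩^{n₁-k} + ⟨ξ⟩^{n₂-k})`. -/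
def InSymbolClass (d : ℕ) (n₁ n₂ : ℝ) (a : PhaseSpace d → ℝ) : Prop :=
  ContDiff ℝ (⊤ : ℕ∞) a ∧ ∀ k : ℕ, ∃ C > 0, ∀ ρ : PhaseSpace d,
    ‖iteratedFDeriv ℝ k a ρ‖ ≤ C * (jap (posPart ρ) ^ (n₁ - k) + jap (momPart ρ) ^ (n₂ - k))

/-- Ellipticity in the class `S^{n₁,n₂}`: `a(x,ξ) ≥ c (⟨x⟩^{n₁} + ⟨ξ⟩^{n₂})` for `|(x,ξ)|`
large enough. -/
def IsElliptic (d : ℕ) (n₁ n₂ : ℝ) (a : PhaseSpace d → ℝ) : Prop :=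
  ∃ c > 0, ∃ R₀ > 0, ∀ ρ : PhaseSpace d, R₀ ≤ ‖ρ‖ →
    c * (jap (posPart ρ) ^ n₁ + jap (momPart ρ) ^ n₂) ≤ a ρ

/-- The standard symplectic matrix `J = [[0, I], [-I, 0]]` acting on phase space:
`J (x, ξ) = (ξ, -x)`. -/
def symplJ {d : ℕ} (ρ : PhaseSpace d) : PhaseSpace d :=
  WithLp.toLp 2 (fun i => match i with
  | Sum.inl j => ρ (Sum.inr j)
  | Sum.inr j => -ρ (Sum.inl j))

/-- `φ` is the (globally defined) Hamiltonian flow of `p`: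
`φ⁰(ρ) = ρ` and `(d/dt) φᵗ(ρ) = J ∇p(φᵗ(ρ))`. -/
def IsHamFlow (d : ℕ) (p : PhaseSpace d → ℝ) (φ : ℝ → PhaseSpace d → PhaseSpace d) : Prop :=
  (∀ ρ, φ 0 ρ = ρ) ∧ ∀ ρ t, HasDerivAt (fun s => φ s ρ) (symplJ (gradient p (φ t ρ))) t


open Real RealInnerProductSpace Set

section Jap

variable {E : Type*} [NormedAddCommGroup E]

lemma one_le_jap (x : E) : 1 ≤ jap x :=
  Real.one_le_sqrt.2 (le_add_of_nonneg_right (by positivity))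

lemma jap_nonneg (x : E) : 0 ≤ jap x := zero_le_one.trans (one_le_jap x)

lemma norm_le_jap (x : E) : ‖x‖ ≤ jap x := Real.le_sqrt_of_sq_le (by linarith)

lemma jap_le_jap {F : Type*} [NormedAddCommGroup F] {x : E} {y : F} (h : ‖x‖ ≤ ‖y‖) :
    jap x ≤ jap y :=
  Real.sqrt_le_sqrt (by gcongr)

lemma jap_add_le (x y : E) : jap (x + y) ≤ jap x + ‖y‖ := by
  have hx : ‖x‖ ≤ jap x := norm_le_jap x
  have hsq : jap x ^ 2 = 1 + ‖x‖ ^ 2 := Real.sq_sqrt (by positivity)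
  refine Real.sqrt_le_iff.2 ⟨add_nonneg (jap_nonneg x) (norm_nonneg y), ?_⟩
  nlinarith [norm_add_le x y, norm_nonneg (x + y), norm_nonneg y]

lemma jap_rpow_le_of_mem_segment [NormedSpace ℝ E] {x y z : E} {n : ℝ} (hn : 0 ≤ n)
    (hz : z ∈ segment ℝ x y) : jap z ^ n ≤ jap x ^ n + jap y ^ n := by
  have hz' : ‖z‖ ≤ max ‖x‖ ‖y‖ := by
    simpa using (convex_closedBall (0 : E) (max ‖x‖ ‖y‖)).segment_subset (by simp) (by simp) hz
  have hmax : jap z ^ n ≤ max (jap x ^ n) (jap y ^ n) := by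
    rcases le_total ‖x‖ ‖y‖ with h | h
    · rw [max_eq_right h] at hz'
      exact le_max_of_le_right (rpow_le_rpow (jap_nonneg z) (jap_le_jap hz') hn)
    · rw [max_eq_left h] at hz'
      exact le_max_of_le_left (rpow_le_rpow (jap_nonneg z) (jap_le_jap hz') hn)
  exact hmax.trans (max_le_add_of_nonneg (rpow_nonneg (jap_nonneg x) n)
    (rpow_nonneg (jap_nonneg y) n))

end Jap

lemma rpow_sub_two_le {a n K E θ : ℝ} (ha : 1 ≤ a) (hn : 0 < n) (hK : 1 ≤ K) (hE : 1 ≤ E)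
    (hθ : 0 ≤ θ) (hθn : 1 - 2 / n ≤ θ) (h : a ^ n ≤ K * E) : a ^ (n - 2) ≤ K * E ^ θ := by
  have hEθ : 1 ≤ E ^ θ := one_le_rpow hE hθ
  rcases le_or_gt n 2 with hn2 | hn2
  · calc a ^ (n - 2) ≤ 1 := rpow_le_one_of_one_le_of_nonpos ha (by linarith)
      _ ≤ K * E ^ θ := one_le_mul_of_one_le_of_one_le hK hEθ
  have he₀ : 0 ≤ 1 - 2 / n := sub_nonneg.2 ((div_le_one hn).2 hn2.le)
  have he₁ : 1 - 2 / n ≤ 1 := by linarith [div_pos two_pos hn]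
  calc a ^ (n - 2) = (a ^ n) ^ (1 - 2 / n) := by
        rw [← rpow_mul (by linarith)]
        congr 1
        field_simp
    _ ≤ (K * E) ^ (1 - 2 / n) := rpow_le_rpow (by positivity) h he₀
    _ = K ^ (1 - 2 / n) * E ^ (1 - 2 / n) := mul_rpow (by linarith) (by linarith)
    _ ≤ K ^ (1 : ℝ) * E ^ θ := by
        gcongr
    _ = K * E ^ θ := by rw [rpow_one]

lemma gronwallBound_zero_self (K x : ℝ) : gronwallBound 0 K K x = exp (K * x) - 1 := by
  rcases eq_or_ne K 0 with rfl | hK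
  · simp [gronwallBound_K0]
  · rw [gronwallBound_of_K_ne_0 hK, div_self hK]
    ring

lemma norm_le_exp_sub_one_of_norm_deriv_le {E : Type*} [NormedAddCommGroup E] [NormedSpace ℝ E]
    {f f' : ℝ → E} {D t : ℝ} (hf : ∀ s, HasDerivAt f (f' s) s) (h₀ : f 0 = 0) (ht : 0 ≤ t)
    (bound : ∀ s ∈ Ico 0 t, ‖f' s‖ ≤ D * ‖f s‖ + D) : ‖f t‖ ≤ exp (D * t) - 1 := by
  have h := norm_le_gronwallBound_of_norm_deriv_right_le
    (fun s _ => (hf s).continuousAt.continuousWithinAt) (fun s _ => (hf s).hasDerivWithinAt)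
    (by simp [h₀] : ‖f 0‖ ≤ 0) bound t ⟨ht, le_rfl⟩
  rwa [sub_zero, gronwallBound_zero_self] at h

section Gradient

variable {F : Type*} [NormedAddCommGroup F] [InnerProductSpace ℝ F] [CompleteSpace F]

lemma norm_gradient_sub_gradient (p q : F → ℝ) (x y : F) :
    ‖gradient p x - gradient q y‖ = ‖fderiv ℝ p x - fderiv ℝ q y‖ := by
  rw [gradient, gradient, ← map_sub, LinearIsometryEquiv.norm_map]

lemma norm_gradient_sub_gradient_le {p q : F → ℝ} {x y : F} {M : ℝ} (hp : ContDiff ℝ 2 p)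
    (hq : DifferentiableAt ℝ q y) (hM : ∀ z ∈ segment ℝ x y, ‖fderiv ℝ (fderiv ℝ p) z‖ ≤ M) :
    ‖gradient q y - gradient p x‖ ≤ ‖fderiv ℝ (fun z => q z - p z) y‖ + M * ‖y - x‖ := by
  have hp₁ : Differentiable ℝ p := hp.differentiable (by norm_num)
  have hp₂ : Differentiable ℝ (fderiv ℝ p) :=
    (hp.fderiv_right (m := 1) (by norm_num)).differentiable (by norm_num)
  have hlip : ‖fderiv ℝ p y - fderiv ℝ p x‖ ≤ M * ‖y - x‖ :=
    (convex_segment x y).norm_image_sub_le_of_norm_fderiv_le (fun z _ => hp₂ z) hM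
      (left_mem_segment ℝ x y) (right_mem_segment ℝ x y)
  calc ‖gradient q y - gradient p x‖
      = ‖(fderiv ℝ q y - fderiv ℝ p y) + (fderiv ℝ p y - fderiv ℝ p x)‖ := by
        rw [norm_gradient_sub_gradient, sub_add_sub_cancel]
    _ ≤ ‖fderiv ℝ (fun z => q z - p z) y‖ + M * ‖y - x‖ := by
        rw [fderiv_fun_sub hq (hp₁ y)]
        exact (norm_add_le _ _).trans (by gcongr)

end Gradient

section PhaseSpace

variable {d : ℕ}

lemma norm_posPart_le (ρ : PhaseSpace d) : ‖posPart ρ‖ ≤ ‖ρ‖ := by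
  simp only [EuclideanSpace.norm_eq, Fintype.sum_sum_type]
  exact Real.sqrt_le_sqrt (le_add_of_nonneg_right (by positivity))

lemma norm_momPart_le (ρ : PhaseSpace d) : ‖momPart ρ‖ ≤ ‖ρ‖ := by
  simp only [EuclideanSpace.norm_eq, Fintype.sum_sum_type]
  exact Real.sqrt_le_sqrt (le_add_of_nonneg_left (by positivity))

lemma posPart_mem_segment {a b ρ : PhaseSpace d} (hρ : ρ ∈ segment ℝ a b) :
    posPart ρ ∈ segment ℝ (posPart a) (posPart b) := by
  obtain ⟨u, v, hu, hv, huv, rfl⟩ := hρ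
  exact ⟨u, v, hu, hv, huv, rfl⟩

lemma momPart_mem_segment {a b ρ : PhaseSpace d} (hρ : ρ ∈ segment ℝ a b) :
    momPart ρ ∈ segment ℝ (momPart a) (momPart b) := by
  obtain ⟨u, v, hu, hv, huv, rfl⟩ := hρ
  exact ⟨u, v, hu, hv, huv, rfl⟩

lemma symplJ_sub (a b : PhaseSpace d) : symplJ (a - b) = symplJ a - symplJ b := by
  ext (j | j)
  · rfl
  · exact neg_sub' _ _

lemma norm_symplJ (v : PhaseSpace d) : ‖symplJ v‖ = ‖v‖ := by
  simp only [EuclideanSpace.norm_eq, Fintype.sum_sum_type, symplJ, norm_neg, add_comm]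

lemma inner_symplJ_self (v : PhaseSpace d) : ⟪v, symplJ v⟫ = 0 := by
  simp [PiLp.inner_apply, Fintype.sum_sum_type, symplJ, mul_comm]

end PhaseSpace

section Symbols

variable {d : ℕ} {n₁ n₂ : ℝ}

def symbolWeight (n₁ n₂ : ℝ) (ρ : PhaseSpace d) : ℝ :=
  jap (posPart ρ) ^ n₁ + jap (momPart ρ) ^ n₂

lemma symbolWeight_le_symbolWeight {m₁ m₂ : ℝ} (h₁ : n₁ ≤ m₁) (h₂ : n₂ ≤ m₂) (ρ : PhaseSpace d) :
    symbolWeight n₁ n₂ ρ ≤ symbolWeight m₁ m₂ ρ :=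
  add_le_add (rpow_le_rpow_of_exponent_le (one_le_jap _) h₁)
    (rpow_le_rpow_of_exponent_le (one_le_jap _) h₂)

lemma symbolWeight_le_of_norm_le (hn₁ : 0 ≤ n₁) (hn₂ : 0 ≤ n₂) {ρ : PhaseSpace d} {R : ℝ}
    (h : ‖ρ‖ ≤ R) : symbolWeight n₁ n₂ ρ ≤ jap R ^ n₁ + jap R ^ n₂ := by
  have hR : ‖ρ‖ ≤ ‖R‖ := h.trans (Real.le_norm_self R)
  exact add_le_add
    (rpow_le_rpow (jap_nonneg _) (jap_le_jap ((norm_posPart_le ρ).trans hR)) hn₁)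
    (rpow_le_rpow (jap_nonneg _) (jap_le_jap ((norm_momPart_le ρ).trans hR)) hn₂)

lemma symbolWeight_le_of_mem_segment (hn₁ : 0 ≤ n₁) (hn₂ : 0 ≤ n₂) {a b ρ : PhaseSpace d}
    (hρ : ρ ∈ segment ℝ a b) :
    symbolWeight n₁ n₂ ρ ≤ symbolWeight n₁ n₂ a + symbolWeight n₁ n₂ b := by
  have h₁ := jap_rpow_le_of_mem_segment hn₁ (posPart_mem_segment hρ)
  have h₂ := jap_rpow_le_of_mem_segment hn₂ (momPart_mem_segment hρ)
  unfold symbolWeight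
  linarith

lemma symbolWeight_sub_two_le {θ K E : ℝ} (hn₁ : 0 < n₁) (hn₂ : 0 < n₂) (hθ : 0 ≤ θ)
    (hθ₁ : 1 - 2 / n₁ ≤ θ) (hθ₂ : 1 - 2 / n₂ ≤ θ) (hK : 1 ≤ K) (hE : 1 ≤ E) {ρ : PhaseSpace d}
    (h : symbolWeight n₁ n₂ ρ ≤ K * E) : symbolWeight (n₁ - 2) (n₂ - 2) ρ ≤ 2 * K * E ^ θ := by
  unfold symbolWeight at h ⊢
  have hx := rpow_sub_two_le (one_le_jap _) hn₁ hK hE hθ hθ₁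
    (by linarith [rpow_nonneg (jap_nonneg (momPart ρ)) n₂])
  have hξ := rpow_sub_two_le (one_le_jap _) hn₂ hK hE hθ hθ₂
    (by linarith [rpow_nonneg (jap_nonneg (posPart ρ)) n₁])
  linarith

lemma IsElliptic.exists_symbolWeight_le {p : PhaseSpace d → ℝ} (he : IsElliptic d n₁ n₂ p)
    (hn₁ : 0 ≤ n₁) (hn₂ : 0 ≤ n₂) :
    ∃ K, 1 ≤ K ∧ ∀ ρ, symbolWeight n₁ n₂ ρ ≤ K * jap (p ρ) := by
  obtain ⟨c, hc, R₀, -, hell⟩ := he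
  set B := jap R₀ ^ n₁ + jap R₀ ^ n₂
  refine ⟨max 1 (max c⁻¹ B), le_max_left _ _, fun ρ => ?_⟩
  have hp : 1 ≤ jap (p ρ) := one_le_jap _
  rcases le_or_gt R₀ ‖ρ‖ with h | h
  · calc symbolWeight n₁ n₂ ρ = c⁻¹ * (c * symbolWeight n₁ n₂ ρ) := by field_simp
      _ ≤ c⁻¹ * jap (p ρ) := by
          gcongr
          exact (hell ρ h).trans ((Real.le_norm_self _).trans (norm_le_jap _))
      _ ≤ max 1 (max c⁻¹ B) * jap (p ρ) := by
          gcongr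
          exact le_max_of_le_right (le_max_left _ _)
  · calc symbolWeight n₁ n₂ ρ ≤ B := symbolWeight_le_of_norm_le hn₁ hn₂ h.le
      _ ≤ max 1 (max c⁻¹ B) * 1 := by
          rw [mul_one]
          exact le_max_of_le_right (le_max_right _ _)
      _ ≤ max 1 (max c⁻¹ B) * jap (p ρ) := by gcongr

lemma IsElliptic.exists_jap_le_mul_jap {p₁ p₂ : PhaseSpace d → ℝ} (he₁ : IsElliptic d n₁ n₂ p₁)
    (hsame : InSymbolClass d (n₁ - 1) (n₂ - 1) (fun ρ => p₂ ρ - p₁ ρ))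
    (hn₁ : 0 ≤ n₁) (hn₂ : 0 ≤ n₂) :
    ∃ K, 1 ≤ K ∧ ∀ ρ, jap (p₂ ρ) ≤ K * jap (p₁ ρ) := by
  obtain ⟨K₁, hK₁, hw⟩ := he₁.exists_symbolWeight_le hn₁ hn₂
  obtain ⟨C, hC, hb⟩ := hsame.2 0
  refine ⟨1 + C * K₁, by nlinarith, fun ρ => ?_⟩
  have hdiff : |p₂ ρ - p₁ ρ| ≤ C * K₁ * jap (p₁ ρ) :=
    calc |p₂ ρ - p₁ ρ| ≤ C * symbolWeight (n₁ - 1) (n₂ - 1) ρ := by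
          simpa [symbolWeight] using hb ρ
      _ ≤ C * symbolWeight n₁ n₂ ρ := by
          gcongr
          exact symbolWeight_le_symbolWeight (by linarith) (by linarith) ρ
      _ ≤ C * (K₁ * jap (p₁ ρ)) := by gcongr; exact hw ρ
      _ = C * K₁ * jap (p₁ ρ) := by ring
  calc jap (p₂ ρ) = jap (p₁ ρ + (p₂ ρ - p₁ ρ)) := by rw [add_sub_cancel]
    _ ≤ jap (p₁ ρ) + |p₂ ρ - p₁ ρ| := jap_add_le _ _
    _ ≤ (1 + C * K₁) * jap (p₁ ρ) := by linarith

end Symbols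

section Flows

variable {d : ℕ} {p p₁ p₂ : PhaseSpace d → ℝ} {φ φ₁ φ₂ : ℝ → PhaseSpace d → PhaseSpace d}

lemma IsHamFlow.apply_flow_eq (hφ : IsHamFlow d p φ) (hp : Differentiable ℝ p) (t : ℝ)
    (ρ : PhaseSpace d) : p (φ t ρ) = p ρ := by
  have hderiv : ∀ s, HasDerivAt (fun u => p (φ u ρ)) 0 s := fun s => by
    have h := (hp (φ s ρ)).hasFDerivAt.comp_hasDerivAt s (hφ.2 ρ s)
    rwa [← inner_gradient_left, inner_symplJ_self] at h
  simpa [hφ.1 ρ] using is_const_of_deriv_eq_zero (fun s => (hderiv s).differentiableAt)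
    (fun s => (hderiv s).deriv) t 0

lemma IsHamFlow.norm_sub_le_exp_sub_one (hφ₁ : IsHamFlow d p₁ φ₁) (hφ₂ : IsHamFlow d p₂ φ₂)
    {ρ : PhaseSpace d} {D t : ℝ} (ht : 0 ≤ t)
    (h : ∀ s, ‖gradient p₂ (φ₂ s ρ) - gradient p₁ (φ₁ s ρ)‖ ≤ D * ‖φ₂ s ρ - φ₁ s ρ‖ + D) :
    ‖φ₂ t ρ - φ₁ t ρ‖ ≤ exp (D * t) - 1 :=
  norm_le_exp_sub_one_of_norm_deriv_le (fun s => (hφ₂.2 ρ s).sub (hφ₁.2 ρ s))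
    (by simp [hφ₁.1, hφ₂.1]) ht fun s _ => by rw [← symplJ_sub, norm_symplJ]; exact h s

variable {n₁ n₂ : ℝ}

lemma exists_symbolWeight_flow_le (hn₁ : 0 ≤ n₁) (hn₂ : 0 ≤ n₂) (hp₁ : Differentiable ℝ p₁)
    (hp₂ : Differentiable ℝ p₂) (he₁ : IsElliptic d n₁ n₂ p₁) (he₂ : IsElliptic d n₁ n₂ p₂)
    (hsame : InSymbolClass d (n₁ - 1) (n₂ - 1) (fun ρ => p₂ ρ - p₁ ρ))
    (hφ₁ : IsHamFlow d p₁ φ₁) (hφ₂ : IsHamFlow d p₂ φ₂) :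
    ∃ K, 1 ≤ K ∧ ∀ s ρ, symbolWeight n₁ n₂ (φ₁ s ρ) ≤ K * jap (p₁ ρ) ∧
      symbolWeight n₁ n₂ (φ₂ s ρ) ≤ K * jap (p₁ ρ) := by
  obtain ⟨K₁, hK₁, hw₁⟩ := he₁.exists_symbolWeight_le hn₁ hn₂
  obtain ⟨K₂, hK₂, hw₂⟩ := he₂.exists_symbolWeight_le hn₁ hn₂
  obtain ⟨K₃, hK₃, hjap⟩ := he₁.exists_jap_le_mul_jap hsame hn₁ hn₂
  refine ⟨max K₁ (K₂ * K₃), le_max_of_le_left hK₁, fun s ρ => ⟨?_, ?_⟩⟩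
  · calc symbolWeight n₁ n₂ (φ₁ s ρ) ≤ K₁ * jap (p₁ (φ₁ s ρ)) := hw₁ _
      _ = K₁ * jap (p₁ ρ) := by rw [hφ₁.apply_flow_eq hp₁]
      _ ≤ max K₁ (K₂ * K₃) * jap (p₁ ρ) :=
          mul_le_mul_of_nonneg_right (le_max_left _ _) (jap_nonneg _)
  · calc symbolWeight n₁ n₂ (φ₂ s ρ) ≤ K₂ * jap (p₂ (φ₂ s ρ)) := hw₂ _
      _ = K₂ * jap (p₂ ρ) := by rw [hφ₂.apply_flow_eq hp₂]
      _ ≤ K₂ * (K₃ * jap (p₁ ρ)) := mul_le_mul_of_nonneg_left (hjap ρ) (by linarith)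
      _ ≤ max K₁ (K₂ * K₃) * jap (p₁ ρ) := by
          rw [← mul_assoc]
          exact mul_le_mul_of_nonneg_right (le_max_right _ _) (jap_nonneg _)

end Flows

lemma exists_norm_gradient_sub_gradient_le {d : ℕ} {n₁ n₂ θ K : ℝ} {p₁ p₂ : PhaseSpace d → ℝ}
    (hp₁ : InSymbolClass d n₁ n₂ p₁) (hp₂ : Differentiable ℝ p₂)
    (hsame : InSymbolClass d (n₁ - 1) (n₂ - 1) (fun ρ => p₂ ρ - p₁ ρ))
    (hn₁ : 0 < n₁) (hn₂ : 0 < n₂) (hθ : 0 ≤ θ) (hθ₁ : 1 - 2 / n₁ ≤ θ) (hθ₂ : 1 - 2 / n₂ ≤ θ)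
    (hK : 1 ≤ K) :
    ∃ C > 0, ∀ σ τ : PhaseSpace d, ∀ E : ℝ, 1 ≤ E → symbolWeight n₁ n₂ σ ≤ K * E →
      symbolWeight n₁ n₂ τ ≤ K * E →
      ‖gradient p₂ τ - gradient p₁ σ‖ ≤ C * E ^ θ * ‖τ - σ‖ + C * E ^ θ := by
  obtain ⟨C₁, hC₁, hb₁⟩ := hsame.2 1
  obtain ⟨C₂, hC₂, hb₂⟩ := hp₁.2 2
  refine ⟨4 * C₂ * K + 2 * C₁ * K, by positivity, fun σ τ E hE hσ hτ => ?_⟩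
  have hEθ : 0 ≤ E ^ θ := rpow_nonneg (by linarith) θ
  have hfirst : ‖fderiv ℝ (fun z => p₂ z - p₁ z) τ‖ ≤ 2 * C₁ * K * E ^ θ := by
    have hw := symbolWeight_sub_two_le hn₁ hn₂ hθ hθ₁ hθ₂ hK hE hτ
    have hb : ‖fderiv ℝ (fun z => p₂ z - p₁ z) τ‖ ≤ C₁ * symbolWeight (n₁ - 2) (n₂ - 2) τ := by
      have h := hb₁ τ
      norm_num [sub_sub] at h
      exact h
    nlinarith
  have hsecond : ∀ z ∈ segment ℝ σ τ, ‖fderiv ℝ (fderiv ℝ p₁) z‖ ≤ 4 * C₂ * K * E ^ θ := by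
    intro z hz
    have hz' : symbolWeight n₁ n₂ z ≤ 2 * K * E := by
      linarith [symbolWeight_le_of_mem_segment hn₁.le hn₂.le hz]
    have hw := symbolWeight_sub_two_le hn₁ hn₂ hθ hθ₁ hθ₂ (by linarith) hE
      (by linarith : symbolWeight n₁ n₂ z ≤ (2 * K) * E)
    have hb : ‖fderiv ℝ (fderiv ℝ p₁) z‖ ≤ C₂ * symbolWeight (n₁ - 2) (n₂ - 2) z := by
      rw [← norm_iteratedFDeriv_one, norm_iteratedFDeriv_fderiv]
      simpa [symbolWeight] using hb₂ z
    nlinarith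
  have hp₁' : ContDiff ℝ 2 p₁ := hp₁.1.of_le (by norm_cast)
  have hnorm := norm_gradient_sub_gradient_le hp₁' (hp₂ τ) hsecond
  have hmul : 0 ≤ 2 * C₁ * K * E ^ θ * ‖τ - σ‖ + 4 * C₂ * K * E ^ θ := by positivity
  nlinarith

/-- Stability estimate: if `p₁, p₂ ∈ S^{n₁,n₂}` are elliptic with the same principal symbol,
then `|φ₂ᵗ(ρ) - φ₁ᵗ(ρ)| ≤ exp(C t ⟨p₁(ρ)⟩^{max(0, 1 - 2/n₊)})`; in particular when
`n₁, n₂ ≤ 2` one has `|φ₂ᵗ(ρ) - φ₁ᵗ(ρ)| ≤ e^{Ct}`. -/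
theorem stmt_1 (d : ℕ) (n₁ n₂ : ℝ) (hn₁ : 0 < n₁) (hn₂ : 0 < n₂)
    (p₁ p₂ : PhaseSpace d → ℝ)
    (hp₁ : InSymbolClass d n₁ n₂ p₁) (hp₂ : InSymbolClass d n₁ n₂ p₂)
    (he₁ : IsElliptic d n₁ n₂ p₁) (he₂ : IsElliptic d n₁ n₂ p₂)
    (hsame : InSymbolClass d (n₁ - 1) (n₂ - 1) (fun ρ => p₂ ρ - p₁ ρ))
    (φ₁ φ₂ : ℝ → PhaseSpace d → PhaseSpace d)
    (hφ₁ : IsHamFlow d p₁ φ₁) (hφ₂ : IsHamFlow d p₂ φ₂) :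
    (∃ C > 0, ∀ ρ : PhaseSpace d, ∀ t : ℝ, 0 ≤ t →
      ‖φ₂ t ρ - φ₁ t ρ‖ ≤ Real.exp (C * t * jap (p₁ ρ) ^ max 0 (1 - 2 / max n₁ n₂))) ∧
    (n₁ ≤ 2 → n₂ ≤ 2 → ∃ C > 0, ∀ ρ : PhaseSpace d, ∀ t : ℝ, 0 ≤ t →
      ‖φ₂ t ρ - φ₁ t ρ‖ ≤ Real.exp (C * t)) := by
  set θ := max 0 (1 - 2 / max n₁ n₂)
  have hθ₁ : 1 - 2 / n₁ ≤ θ := le_max_of_le_right (by gcongr; exact le_max_left _ _)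
  have hθ₂ : 1 - 2 / n₂ ≤ θ := le_max_of_le_right (by gcongr; exact le_max_right _ _)
  have hdiff₁ : Differentiable ℝ p₁ := hp₁.1.differentiable (by simp)
  have hdiff₂ : Differentiable ℝ p₂ := hp₂.1.differentiable (by simp)
  obtain ⟨K, hK, hshell⟩ := exists_symbolWeight_flow_le hn₁.le hn₂.le hdiff₁ hdiff₂ he₁ he₂
    hsame hφ₁ hφ₂
  obtain ⟨C, hC, hgrad⟩ := exists_norm_gradient_sub_gradient_le hp₁ hdiff₂ hsame hn₁ hn₂
    (le_max_left _ _) hθ₁ hθ₂ hK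
  have hmain : ∀ ρ t, 0 ≤ t → ‖φ₂ t ρ - φ₁ t ρ‖ ≤ exp (C * t * jap (p₁ ρ) ^ θ) := by
    intro ρ t ht
    have h := hφ₁.norm_sub_le_exp_sub_one hφ₂ ht fun s =>
      hgrad _ _ _ (one_le_jap _) (hshell s ρ).1 (hshell s ρ).2
    rw [mul_right_comm] at h
    linarith
  refine ⟨⟨C, hC, hmain⟩, fun h₁ h₂ => ⟨C, hC, fun ρ t ht => ?_⟩⟩
  have hθ : θ = 0 := max_eq_left (by
    rw [sub_nonpos, le_div_iff₀ (lt_max_of_lt_left hn₁)]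
    linarith [max_le h₁ h₂])
  simpa [hθ] using hmain ρ t ht

end
end

section
/- Let ω ⊆ ℝ be a Borel set. Then liminf_{A→+∞} ∫₀^{2π} 1_ω(A·sin t) dt > 0 (where A ranges over positive reals) if and only if ω is weakly thick, i.e. liminf_{x→+∞} |ω ∩ [−x, x]| / (2x) > 0, where |·| denotes one-dimensional Lebesgue measure. -/
/-!
On the half period `[-π/2, π/2]` the map `t ↦ A sin t` is monotone with derivative `A cos t`
and maps the visit times `{t | A sin t ∈ ω}` onto `ω ∩ [-A, A]`; by periodicity and the symmetry
`sin (π - t) = sin t`, the integral over a full period is twice the measure `τ(A)` of these visit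
times. The change of variables formula gives `|ω ∩ [-A, A]| = ∫ A cos t` over the visit times.
Since `cos t ≤ 1`, this is at most `A τ(A)`; since `cos t ≥ sin δ` away from the
`δ`-neighbourhoods of `±π/2`, it is at least `A sin δ (τ(A) - 2δ)`. Hence the density
`|ω ∩ [-A, A]| / 2A` is bounded below uniformly in large `A` if and only if `τ(A)` is.
-/

open MeasureTheory Filter Real Set

theorem lt_liminf_iff_exists_eventually_le {α β : Type*} [ConditionallyCompleteLinearOrder β]
    [DenselyOrdered β] {f : α → β} {l : Filter α} [l.NeBot] {b : β}
    (hle : IsBoundedUnder (· ≤ ·) l f) (hge : IsBoundedUnder (· ≥ ·) l f) :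
    b < liminf f l ↔ ∃ c > b, ∀ᶠ x in l, c ≤ f x := by
  constructor
  · intro h
    obtain ⟨c, hbc, hc⟩ := exists_between h
    exact ⟨c, hbc, (eventually_lt_of_lt_liminf hc hge).mono fun _ => le_of_lt⟩
  · rintro ⟨c, hbc, h⟩
    exact hbc.trans_le (le_liminf_of_le hle.isCoboundedUnder_ge h)

theorem integral_comp_sin_zero_two_pi {f : ℝ → ℝ}
    (hf : ∀ a b, IntervalIntegrable (fun t => f (sin t)) volume a b) :
    ∫ t in (0 : ℝ)..2 * π, f (sin t) = 2 * ∫ t in -(π / 2)..π / 2, f (sin t) := by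
  have hper : Function.Periodic (fun t => f (sin t)) (2 * π) := fun t => by
    simp only [sin_add_two_pi]
  have hreflect : ∫ t in π / 2..3 * π / 2, f (sin t) = ∫ t in -(π / 2)..π / 2, f (sin t) := by
    have := intervalIntegral.integral_comp_sub_left (fun t => f (sin t)) (a := -(π / 2))
      (b := π / 2) π
    simp only [sin_pi_sub] at this
    rw [this]
    congr 1 <;> ring
  calc ∫ t in (0 : ℝ)..2 * π, f (sin t)
      = ∫ t in -(π / 2)..-(π / 2) + 2 * π, f (sin t) := by
        simpa using hper.intervalIntegral_add_eq 0 (-(π / 2))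
    _ = (∫ t in -(π / 2)..π / 2, f (sin t)) + ∫ t in π / 2..3 * π / 2, f (sin t) := by
        rw [show -(π / 2) + 2 * π = 3 * π / 2 by ring]
        exact (intervalIntegral.integral_add_adjacent_intervals (hf _ _) (hf _ _)).symm
    _ = 2 * ∫ t in -(π / 2)..π / 2, f (sin t) := by rw [hreflect, two_mul]

theorem sin_le_cos_of_abs_le {δ t : ℝ} (hδ : 0 ≤ δ) (ht : |t| ≤ π / 2 - δ) : sin δ ≤ cos t := by
  rw [← cos_abs, ← cos_pi_div_two_sub]
  exact cos_le_cos_of_nonneg_of_le_pi (abs_nonneg t) (by linarith [pi_pos]) ht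

theorem volume_image_mul_sin {A : ℝ} (hA : 0 ≤ A) {s : Set ℝ} (hs : MeasurableSet s)
    (hsub : s ⊆ Icc (-(π / 2)) (π / 2)) :
    volume ((fun t => A * sin t) '' s) = ∫⁻ t in s, ENNReal.ofReal (A * cos t) :=
  (lintegral_deriv_eq_volume_image_of_monotoneOn hs
    (fun t _ => ((hasDerivAt_sin t).const_mul A).hasDerivWithinAt)
    fun _ hx _ hy hxy => mul_le_mul_of_nonneg_left (monotoneOn_sin (hsub hx) (hsub hy) hxy) hA).symm

theorem volume_real_inter_Icc_le_two_mul (ω : Set ℝ) {x : ℝ} (hx : 0 ≤ x) :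
    volume.real (ω ∩ Icc (-x) x) ≤ 2 * x := by
  grw [measureReal_mono inter_subset_right measure_Icc_lt_top.ne,
    volume_real_Icc_of_le (by linarith)]
  linarith

def visitTimes (ω : Set ℝ) (A : ℝ) : Set ℝ :=
  Icc (-(π / 2)) (π / 2) ∩ (fun t => A * sin t) ⁻¹' ω

theorem measurableSet_visitTimes {ω : Set ℝ} (hω : MeasurableSet ω) (A : ℝ) :
    MeasurableSet (visitTimes ω A) :=
  measurableSet_Icc.inter ((measurable_const.mul measurable_sin) hω)

theorem volume_visitTimes_ne_top (ω : Set ℝ) (A : ℝ) : volume (visitTimes ω A) ≠ ⊤ :=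
  measure_ne_top_of_subset inter_subset_left measure_Icc_lt_top.ne

theorem volume_real_visitTimes_le_pi (ω : Set ℝ) (A : ℝ) : volume.real (visitTimes ω A) ≤ π := by
  grw [visitTimes, measureReal_mono inter_subset_left measure_Icc_lt_top.ne,
    volume_real_Icc_of_le (by linarith [pi_pos])]
  linarith

theorem integral_indicator_comp_mul_sin {ω : Set ℝ} (hω : MeasurableSet ω) (A : ℝ) :
    ∫ t in (0 : ℝ)..2 * π, ω.indicator (fun _ => (1 : ℝ)) (A * sin t)
      = 2 * volume.real (visitTimes ω A) := by
  have hmeas : Measurable fun t => A * sin t := measurable_const.mul measurable_sin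
  have hint : ∀ a b, IntervalIntegrable
      (fun t => ω.indicator (fun _ => (1 : ℝ)) (A * sin t)) volume a b := fun a b =>
    (intervalIntegrable_const (c := (1 : ℝ))).mono_fun
      ((measurable_const.indicator hω).comp hmeas).aestronglyMeasurable
      (ae_of_all _ fun t => norm_indicator_le_norm_self _ _)
  rw [integral_comp_sin_zero_two_pi (f := fun y => ω.indicator (fun _ => (1 : ℝ)) (A * y)) hint,
    intervalIntegral.integral_of_le (by linarith [pi_pos]), ← integral_Icc_eq_integral_Ioc]
  change 2 * ∫ t in Icc _ _, ((fun t => A * sin t) ⁻¹' ω).indicator 1 t = _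
  rw [integral_indicator_one (hmeas hω), measureReal_restrict_apply (hmeas hω), inter_comm]
  rfl

theorem image_visitTimes (ω : Set ℝ) {A : ℝ} (hA : 0 < A) :
    (fun t => A * sin t) '' visitTimes ω A = ω ∩ Icc (-A) A := by
  ext s
  constructor
  · rintro ⟨t, ⟨-, ht⟩, rfl⟩
    exact ⟨ht, by nlinarith [neg_one_le_sin t], by nlinarith [sin_le_one t]⟩
  · rintro ⟨hs, hlo, hhi⟩
    have hsA : A * sin (arcsin (s / A)) = s := by
      rw [sin_arcsin (by rw [le_div_iff₀ hA]; linarith) (by rw [div_le_iff₀ hA]; linarith)]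
      field_simp
    exact ⟨arcsin (s / A),
      ⟨⟨neg_pi_div_two_le_arcsin _, arcsin_le_pi_div_two _⟩, by simpa [hsA] using hs⟩, hsA⟩

theorem volume_inter_Icc_le_mul_volume_visitTimes {ω : Set ℝ} (hω : MeasurableSet ω) {A : ℝ}
    (hA : 0 < A) :
    volume (ω ∩ Icc (-A) A) ≤ ENNReal.ofReal A * volume (visitTimes ω A) := by
  rw [← image_visitTimes ω hA,
    volume_image_mul_sin hA.le (measurableSet_visitTimes hω A) inter_subset_left,
    ← setLIntegral_const]
  exact setLIntegral_mono measurable_const fun t _ =>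
    ENNReal.ofReal_le_ofReal (by nlinarith [cos_le_one t])

theorem volume_visitTimes_inter_le {ω : Set ℝ} (hω : MeasurableSet ω) {A δ : ℝ} (hA : 0 < A)
    (hδ : 0 ≤ δ) :
    ENNReal.ofReal (A * sin δ) * volume (visitTimes ω A ∩ Icc (-(π / 2) + δ) (π / 2 - δ))
      ≤ volume (ω ∩ Icc (-A) A) := by
  set s := visitTimes ω A ∩ Icc (-(π / 2) + δ) (π / 2 - δ)
  have hs : MeasurableSet s := (measurableSet_visitTimes hω A).inter measurableSet_Icc
  have hsub : s ⊆ visitTimes ω A := inter_subset_left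
  calc ENNReal.ofReal (A * sin δ) * volume s = ∫⁻ _ in s, ENNReal.ofReal (A * sin δ) :=
        (setLIntegral_const _ _).symm
    _ ≤ ∫⁻ t in s, ENNReal.ofReal (A * cos t) := setLIntegral_mono' hs fun t ht =>
        ENNReal.ofReal_le_ofReal <| mul_le_mul_of_nonneg_left
          (sin_le_cos_of_abs_le hδ (abs_le.2 ⟨by linarith [ht.2.1], ht.2.2⟩)) hA.le
    _ = volume ((fun t => A * sin t) '' s) :=
        (volume_image_mul_sin hA.le hs (hsub.trans inter_subset_left)).symm
    _ ≤ volume (ω ∩ Icc (-A) A) := by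
        rw [← image_visitTimes ω hA]
        exact measure_mono (image_mono hsub)

theorem volume_real_visitTimes_le_add (ω : Set ℝ) (A : ℝ) {δ : ℝ} (hδ : 0 ≤ δ) :
    volume.real (visitTimes ω A)
      ≤ 2 * δ + volume.real (visitTimes ω A ∩ Icc (-(π / 2) + δ) (π / 2 - δ)) := by
  have := pi_pos
  set s := visitTimes ω A ∩ Icc (-(π / 2) + δ) (π / 2 - δ)
  have hcover : visitTimes ω A ⊆ Icc (-(π / 2)) (-(π / 2) + δ) ∪ Icc (π / 2 - δ) (π / 2) ∪ s := by
    intro t ht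
    have ht' := ht.1
    by_cases h1 : t ≤ -(π / 2) + δ
    · exact Or.inl (Or.inl ⟨ht'.1, h1⟩)
    by_cases h2 : π / 2 - δ ≤ t
    · exact Or.inl (Or.inr ⟨h2, ht'.2⟩)
    exact Or.inr ⟨ht, by linarith, by linarith⟩
  have hbdd : Icc (-(π / 2)) (-(π / 2) + δ) ∪ Icc (π / 2 - δ) (π / 2) ∪ s
      ⊆ Icc (-(π / 2) - δ) (π / 2 + δ) :=
    union_subset (union_subset (Icc_subset_Icc (by linarith) (by linarith))
      (Icc_subset_Icc (by linarith) (by linarith)))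
      (inter_subset_left.trans (inter_subset_left.trans (Icc_subset_Icc (by linarith)
        (by linarith))))
  grw [measureReal_mono hcover (measure_ne_top_of_subset hbdd measure_Icc_lt_top.ne),
    measureReal_union_le, measureReal_union_le, volume_real_Icc_of_le (by linarith),
    volume_real_Icc_of_le (by linarith)]
  linarith

theorem volume_real_inter_Icc_le {ω : Set ℝ} (hω : MeasurableSet ω) {A : ℝ} (hA : 0 < A) :
    volume.real (ω ∩ Icc (-A) A) ≤ A * volume.real (visitTimes ω A) := by
  have := ENNReal.toReal_mono (ENNReal.mul_ne_top ENNReal.ofReal_ne_top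
    (volume_visitTimes_ne_top ω A)) (volume_inter_Icc_le_mul_volume_visitTimes hω hA)
  rwa [ENNReal.toReal_mul, ENNReal.toReal_ofReal hA.le] at this

theorem mul_sin_mul_sub_le_volume_real {ω : Set ℝ} (hω : MeasurableSet ω) {A δ : ℝ} (hA : 0 < A)
    (hδ : 0 ≤ δ) (hδπ : δ ≤ π) :
    A * sin δ * (volume.real (visitTimes ω A) - 2 * δ) ≤ volume.real (ω ∩ Icc (-A) A) := by
  have hAδ : 0 ≤ A * sin δ := mul_nonneg hA.le (sin_nonneg_of_nonneg_of_le_pi hδ hδπ)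
  have hmid := ENNReal.toReal_mono (measure_ne_top_of_subset inter_subset_right
    measure_Icc_lt_top.ne) (volume_visitTimes_inter_le hω hA hδ)
  rw [ENNReal.toReal_mul, ENNReal.toReal_ofReal hAδ] at hmid
  calc A * sin δ * (volume.real (visitTimes ω A) - 2 * δ)
      ≤ A * sin δ * volume.real (visitTimes ω A ∩ Icc (-(π / 2) + δ) (π / 2 - δ)) := by
        gcongr
        linarith [volume_real_visitTimes_le_add ω A hδ]
    _ ≤ volume.real (ω ∩ Icc (-A) A) := hmid

theorem exists_pos_mul_le_volume_real_inter_Icc {ω : Set ℝ} (hω : MeasurableSet ω) {c : ℝ}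
    (hc : 0 < c) :
    ∃ κ > 0, ∀ A > 0, c ≤ 2 * volume.real (visitTimes ω A) →
      κ * (2 * A) ≤ volume.real (ω ∩ Icc (-A) A) := by
  set δ := min (c / 8) 1
  have hδ : 0 < δ := lt_min (by positivity) one_pos
  have hδ1 : δ ≤ 1 := min_le_right _ _
  have hsin : 0 < sin δ := sin_pos_of_pos_of_lt_pi hδ (by linarith [pi_gt_three])
  refine ⟨c * sin δ / 8, by positivity, fun A hA hcA => ?_⟩
  have hgap : c / 4 ≤ volume.real (visitTimes ω A) - 2 * δ := by
    linarith [min_le_left (c / 8) 1]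
  calc c * sin δ / 8 * (2 * A) = A * sin δ * (c / 4) := by ring
    _ ≤ A * sin δ * (volume.real (visitTimes ω A) - 2 * δ) := by gcongr
    _ ≤ _ := mul_sin_mul_sub_le_volume_real hω hA hδ.le (by linarith [pi_gt_three])

/-- For the one-dimensional harmonic oscillator, the classical observability constant
`𝔎^∞ = liminf_{A→∞} ∫₀^{2π} 1_ω(A sin t) dt` is positive if and only if `ω` is weakly
thick, i.e. `liminf_{x→∞} |ω ∩ [-x,x]|/(2x) > 0`. -/
theorem stmt_8 (ω : Set ℝ) (hω : MeasurableSet ω) :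
    (0 < liminf
      (fun A : ℝ => ∫ t in (0 : ℝ)..(2 * Real.pi),
        Set.indicator ω (fun _ => (1 : ℝ)) (A * Real.sin t)) atTop)
    ↔ 0 < liminf
      (fun x : ℝ => (volume (ω ∩ Set.Icc (-x) x)).toReal / (2 * x)) atTop := by
  simp only [integral_indicator_comp_mul_sin hω, ← measureReal_def]
  rw [lt_liminf_iff_exists_eventually_le
      (isBoundedUnder_of_eventually_le (a := 2 * π) (.of_forall fun A => by
        linarith [volume_real_visitTimes_le_pi ω A]))
      (isBoundedUnder_of_eventually_ge (a := 0) (.of_forall fun A => by positivity)),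
    lt_liminf_iff_exists_eventually_le
      (isBoundedUnder_of_eventually_le (a := 1) ((eventually_gt_atTop 0).mono fun x hx =>
        (div_le_one (by positivity)).2 (volume_real_inter_Icc_le_two_mul ω hx.le)))
      (isBoundedUnder_of_eventually_ge (a := 0) ((eventually_gt_atTop 0).mono fun x hx =>
        by positivity))]
  constructor
  · rintro ⟨c, hc, h⟩
    obtain ⟨κ, hκ, hκA⟩ := exists_pos_mul_le_volume_real_inter_Icc hω hc
    refine ⟨κ, hκ, ?_⟩
    filter_upwards [h, eventually_gt_atTop 0] with A hcA hA
    rw [le_div_iff₀ (by positivity)]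
    exact hκA A hA hcA
  · rintro ⟨c, hc, h⟩
    refine ⟨4 * c, by positivity, ?_⟩
    filter_upwards [h, eventually_gt_atTop 0] with A hcA hA
    rw [le_div_iff₀ (by positivity)] at hcA
    nlinarith [volume_real_inter_Icc_le hω hA]
end

section
/- Let a > 2√3 and define V : ℝ → ℝ by V(x) = (2 + sin(a·log⟨x⟩))·x², where ⟨x⟩ = (1+x²)^{1/2}. Then the set of critical points of V is unbounded: for every M > 0 there exists x ∈ ℝ with |x| > M and V'(x) = 0. -/
/-!
Differentiating gives `V'(x) = x g(x)` with `g(x) = a cos θ · x²/(1+x²) + 4 + 2 sin θ`, where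
`θ = a log⟨x⟩` increases to `∞`. Since `x²/(1+x²) → 1`, every value `a cos t + 4 + 2 sin t` is a
limit of `g` along the points where `θ ≡ t (mod 2π)`. At `t = π/2` this value is `6`; at the `t`
minimising `a cos t + 2 sin t` it is `4 - √(a² + 4)`, which is negative because `a² > 12`. So `g`
changes sign on every half-line, and the intermediate value theorem produces the critical points.
-/

open Real Filter Topology

noncomputable def phase (a x : ℝ) : ℝ := a * log √(1 + x ^ 2)

noncomputable def criticalFactor (a x : ℝ) : ℝ :=
  a * cos (phase a x) * (x ^ 2 / (1 + x ^ 2)) + 4 + 2 * sin (phase a x)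

noncomputable def phaseInv (a t : ℝ) : ℝ := √(exp (2 * t / a) - 1)

theorem hasDerivAt_potential (a x : ℝ) :
    HasDerivAt (fun y ↦ (2 + sin (phase a y)) * y ^ 2) (x * criticalFactor a x) x := by
  have hpos : 0 < 1 + x ^ 2 := by positivity
  have hx2 : HasDerivAt (fun y : ℝ ↦ 1 + y ^ 2) (2 * x) x := by
    simpa using (hasDerivAt_pow 2 x).const_add 1
  have hphase := ((hx2.sqrt hpos.ne').log (by positivity)).const_mul a
  refine ((hphase.sin.const_add 2).fun_mul (hasDerivAt_pow 2 x)).congr_deriv ?_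
  unfold criticalFactor phase
  field_simp
  rw [sq_sqrt hpos.le]
  ring

theorem continuous_criticalFactor (a : ℝ) : Continuous (criticalFactor a) := by
  unfold criticalFactor phase
  fun_prop (disch := intros; positivity)

theorem phase_phaseInv {a t : ℝ} (ha : 0 < a) (ht : 0 ≤ t) : phase a (phaseInv a t) = t := by
  have hexp : 1 ≤ exp (2 * t / a) := one_le_exp (by positivity)
  rw [phase, phaseInv, sq_sqrt (by linarith), add_sub_cancel, log_sqrt (exp_nonneg _), log_exp]
  field_simp

theorem tendsto_phaseInv_atTop {a : ℝ} (ha : 0 < a) : Tendsto (phaseInv a) atTop atTop := by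
  have h2t : Tendsto (fun t : ℝ ↦ 2 * t / a) atTop atTop :=
    (tendsto_id.const_mul_atTop two_pos).atTop_div_const ha
  exact tendsto_sqrt_atTop.comp <| tendsto_atTop_add_const_right _ _ <| tendsto_exp_atTop.comp h2t

theorem tendsto_sq_div_one_add_sq_atTop :
    Tendsto (fun x : ℝ ↦ x ^ 2 / (1 + x ^ 2)) atTop (𝓝 1) := by
  have h : Tendsto (fun x : ℝ ↦ 1 - (1 + x ^ 2)⁻¹) atTop (𝓝 (1 - 0)) :=
    tendsto_const_nhds.sub <| tendsto_inv_atTop_zero.comp <|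
      tendsto_atTop_add_const_left _ _ (tendsto_pow_atTop two_ne_zero)
  refine (sub_zero (1 : ℝ) ▸ h).congr fun x ↦ ?_
  field_simp
  ring

theorem exists_mul_cos_add_mul_sin_eq_neg_sqrt (p q : ℝ) :
    ∃ t, p * cos t + q * sin t = -√(p ^ 2 + q ^ 2) := by
  set z : ℂ := ⟨-p, -q⟩
  have hz : ‖z‖ = √(p ^ 2 + q ^ 2) := by
    rw [Complex.norm_def, Complex.normSq_mk]; ring_nf
  refine ⟨Complex.arg z, ?_⟩
  rcases eq_or_ne ‖z‖ 0 with h0 | h0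
  · obtain ⟨rfl, rfl⟩ : p = 0 ∧ q = 0 := by simpa [z, Complex.ext_iff] using h0
    simp
  · apply mul_left_cancel₀ h0
    have hre : ‖z‖ * cos z.arg = -p := Complex.norm_mul_cos_arg z
    have him : ‖z‖ * sin z.arg = -q := Complex.norm_mul_sin_arg z
    have hsq : ‖z‖ ^ 2 = p ^ 2 + q ^ 2 := by rw [hz, sq_sqrt (by positivity)]
    rw [← hz]
    linear_combination p * hre + q * him + hsq

theorem exists_gt_eq_zero_of_frequently {g : ℝ → ℝ} (hg : Continuous g)
    (hpos : ∃ᶠ x in atTop, 0 < g x) (hneg : ∃ᶠ x in atTop, g x < 0) (M : ℝ) :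
    ∃ x, M < x ∧ g x = 0 := by
  obtain ⟨x₁, hMx₁, hx₁⟩ := frequently_atTop'.1 hpos M
  obtain ⟨x₂, hx₁₂, hx₂⟩ := (frequently_atTop.1 hneg) x₁
  obtain ⟨x, hx, hgx⟩ :=
    intermediate_value_Icc' hx₁₂ hg.continuousOn ⟨hx₂.le, hx₁.le⟩
  exact ⟨x, hMx₁.trans_le hx.1, hgx⟩

theorem mapClusterPt_criticalFactor {a : ℝ} (ha : 0 < a) (t₀ : ℝ) :
    MapClusterPt (a * cos t₀ + 4 + 2 * sin t₀) atTop (criticalFactor a) := by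
  set t : ℕ → ℝ := fun k ↦ t₀ + k * (2 * π)
  have ht : Tendsto t atTop atTop :=
    tendsto_atTop_add_const_left _ _ <| tendsto_natCast_atTop_atTop.atTop_mul_const (by positivity)
  have hx := (tendsto_phaseInv_atTop ha).comp ht
  refine .of_comp hx (Tendsto.mapClusterPt ?_)
  have hlim : Tendsto (fun k ↦ a * cos t₀ * (phaseInv a (t k) ^ 2 / (1 + phaseInv a (t k) ^ 2))
      + 4 + 2 * sin t₀) atTop (𝓝 (a * cos t₀ * 1 + 4 + 2 * sin t₀)) :=
    ((tendsto_sq_div_one_add_sq_atTop.comp hx).const_mul _ |>.add_const _).add_const _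
  rw [mul_one] at hlim
  refine hlim.congr' <| (ht.eventually_ge_atTop 0).mono fun k hk ↦ ?_
  simp only [Function.comp, criticalFactor, phase_phaseInv ha hk, t, cos_add_nat_mul_two_pi,
    sin_add_nat_mul_two_pi]

/-- For `a > 2√3`, the potential `V(x) = (2 + sin(a log⟨x⟩)) x²` has an unbounded set of
critical points. -/
theorem stmt_9 (a : ℝ) (ha : 2 * Real.sqrt 3 < a) :
    ∀ M : ℝ, 0 < M → ∃ x : ℝ, M < |x| ∧
      deriv (fun y : ℝ => (2 + Real.sin (a * Real.log (Real.sqrt (1 + y ^ 2)))) * y ^ 2) x = 0 := by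
  intro M _
  have ha0 : 0 < a := lt_of_le_of_lt (by positivity) ha
  have hpos : ∃ᶠ x in atTop, 0 < criticalFactor a x :=
    (mapClusterPt_criticalFactor ha0 (π / 2)).frequently (lt_mem_nhds (by norm_num))
  obtain ⟨t, ht⟩ := exists_mul_cos_add_mul_sin_eq_neg_sqrt a 2
  have hneg : ∃ᶠ x in atTop, criticalFactor a x < 0 := by
    refine (mapClusterPt_criticalFactor ha0 t).frequently (gt_mem_nhds ?_)
    have h12 : 12 < a ^ 2 := by nlinarith [sq_sqrt (show (0 : ℝ) ≤ 3 by norm_num), sqrt_nonneg 3]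
    have h4 : 4 < √(a ^ 2 + 2 ^ 2) := (lt_sqrt (by norm_num)).2 (by linarith)
    linarith
  obtain ⟨x, hMx, hx⟩ := exists_gt_eq_zero_of_frequently (continuous_criticalFactor a) hpos hneg M
  refine ⟨x, hMx.trans_le (le_abs_self x), ?_⟩
  exact (hasDerivAt_potential a x).deriv.trans (by rw [hx, mul_zero])
end

section
/- Let T > 0, ε > 0, E ≥ 1 and C > 0, and let x : [0, T] → ℝ^d be a measurable curve such that for every r ≥ 0 the Lebesgue measure of {t ∈ [0, T] : |x(t)| ≤ r} is at most C·r/√E. Then ∫₀^T √E · ⟨x(t)⟩^{−(1+ε)} dt ≤ C·(1+ε)/ε, where ⟨y⟩ = (1+|y|²)^{1/2}. -/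
/-! By the layer-cake formula, `∫ ⟨x⟩^{-(1+ε)}` is the integral over `λ ∈ (0, 1)` of the time
during which `⟨x⟩^{-(1+ε)} > λ`, which forces `|x| < λ^{-1/(1+ε)}`. The hypothesis bounds this time by
`(C/√E) λ^{-1/(1+ε)}`, which is integrable on `(0, 1)` with integral `(C/√E)(1+ε)/ε`. -/

open MeasureTheory

noncomputable section

open Set

section Jap

variable {F : Type*} [NormedAddCommGroup F]

lemma one_le_jap_s10 (y : F) : 1 ≤ jap y :=
  Real.one_le_sqrt.2 (le_add_of_nonneg_right (sq_nonneg _))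

lemma jap_pos (y : F) : 0 < jap y :=
  zero_lt_one.trans_le (one_le_jap_s10 y)

lemma norm_le_jap_s10 (y : F) : ‖y‖ ≤ jap y :=
  Real.le_sqrt_of_sq_le (le_add_of_nonneg_left zero_le_one)

lemma continuous_jap : Continuous (jap : F → ℝ) := by
  unfold jap
  fun_prop

end Jap

section LayerCake

variable {α : Type*} [MeasurableSpace α] {μ : Measure α}

lemma setIntegral_Ioo_zero_one_rpow_neg {p : ℝ} (hp : p < 1) :
    ∫ t in Ioo (0 : ℝ) 1, t ^ (-p) = 1 / (1 - p) := by
  rw [← integral_Ioc_eq_integral_Ioo, ← intervalIntegral.integral_of_le zero_le_one,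
    integral_rpow (Or.inl (by linarith)), Real.zero_rpow (by linarith), Real.one_rpow]
  ring

lemma lintegral_ofReal_le_of_meas_lt_le_mul_rpow {f : α → ℝ} {A p : ℝ}
    (hf : AEMeasurable f μ) (hf0 : 0 ≤ᵐ[μ] f) (hf1 : ∀ a, f a ≤ 1) (hA : 0 ≤ A) (hp : p < 1)
    (h : ∀ t ∈ Ioo (0 : ℝ) 1, μ {a | t < f a} ≤ ENNReal.ofReal (A * t ^ (-p))) :
    ∫⁻ a, ENNReal.ofReal (f a) ∂μ ≤ ENNReal.ofReal (A / (1 - p)) := by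
  set g : ℝ → ℝ := fun t ↦ A * t ^ (-p)
  have hbound : ∀ t ∈ Ioi (0 : ℝ),
      μ {a | t < f a} ≤ (Iio 1).indicator (fun t ↦ ENNReal.ofReal (g t)) t := by
    intro t ht
    by_cases ht1 : t < 1
    · rw [indicator_of_mem (mem_Iio.2 ht1)]
      exact h t ⟨ht, ht1⟩
    · have hempty : {a | t < f a} = ∅ :=
        eq_empty_of_forall_notMem fun a ha ↦ ht1 (lt_of_lt_of_le ha (hf1 a))
      simp [hempty]
  have hg_int : IntegrableOn g (Ioo 0 1) :=
    (((intervalIntegral.intervalIntegrable_rpow' (by linarith)).const_mul A).1).mono_set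
      Ioo_subset_Ioc_self
  have hg_nonneg : 0 ≤ᵐ[volume.restrict (Ioo (0 : ℝ) 1)] g := by
    filter_upwards [ae_restrict_mem measurableSet_Ioo] with t ht
    have := ht.1
    positivity
  calc ∫⁻ a, ENNReal.ofReal (f a) ∂μ = ∫⁻ t in Ioi 0, μ {a | t < f a} :=
        lintegral_eq_lintegral_meas_lt μ hf0 hf
    _ ≤ ∫⁻ t in Ioi 0, (Iio 1).indicator (fun t ↦ ENNReal.ofReal (g t)) t :=
        setLIntegral_mono
          ((Measurable.ennreal_ofReal (by fun_prop)).indicator measurableSet_Iio) hbound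
    _ = ∫⁻ t in Ioo 0 1, ENNReal.ofReal (g t) := by
        rw [lintegral_indicator measurableSet_Iio, Measure.restrict_restrict measurableSet_Iio,
          Iio_inter_Ioi]
    _ = ENNReal.ofReal (A / (1 - p)) := by
        rw [← ofReal_integral_eq_lintegral_ofReal hg_int hg_nonneg, integral_const_mul,
          setIntegral_Ioo_zero_one_rpow_neg hp, mul_one_div]

lemma lintegral_ofReal_rpow_neg_le {u : α → ℝ} {A ε : ℝ} (hu : AEMeasurable u μ)
    (hu1 : ∀ a, 1 ≤ u a) (hA : 0 ≤ A) (hε : 0 < ε)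
    (h : ∀ r, 0 ≤ r → μ {a | u a ≤ r} ≤ ENNReal.ofReal (A * r)) :
    ∫⁻ a, ENNReal.ofReal (u a ^ (-(1 + ε))) ∂μ ≤ ENNReal.ofReal (A * (1 + ε) / ε) := by
  have hq : 0 < 1 + ε := by linarith
  have hu0 : ∀ a, 0 < u a := fun a ↦ zero_lt_one.trans_le (hu1 a)
  have hlevel : ∀ t ∈ Ioo (0 : ℝ) 1,
      μ {a | t < u a ^ (-(1 + ε))} ≤ ENNReal.ofReal (A * t ^ (-(1 + ε)⁻¹)) := by
    intro t ht
    refine le_trans (measure_mono fun a ha ↦ ?_) (h _ (by have := ht.1; positivity))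
    have := (Real.lt_rpow_inv_iff_of_neg (hu0 a) ht.1 (neg_neg_of_pos hq)).2 ha
    rw [inv_neg] at this
    exact this.le
  have key := lintegral_ofReal_le_of_meas_lt_le_mul_rpow (hu.pow_const _)
    (ae_of_all _ fun a ↦ (Real.rpow_pos_of_pos (hu0 a) _).le)
    (fun a ↦ Real.rpow_le_one_of_one_le_of_nonpos (hu1 a) (by linarith)) hA
    (inv_lt_one_of_one_lt₀ (by linarith)) hlevel
  have hp_eq : 1 - (1 + ε)⁻¹ = ε / (1 + ε) := by field_simp; ring
  rwa [hp_eq, div_div_eq_mul_div] at key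

end LayerCake

/-- Classical analogue of the Kato smoothing effect: if a measurable curve `x(t)` spends at
most `C r/√E` time in every ball of radius `r`, then
`∫₀^T √E ⟨x(t)⟩^{-(1+ε)} dt ≤ C(1+ε)/ε`. -/
theorem stmt_10 (d : ℕ) (T ε E C : ℝ) (hT : 0 < T) (hε : 0 < ε) (hE : 1 ≤ E) (hC : 0 < C)
    (x : ℝ → EuclideanSpace ℝ (Fin d)) (hx : Measurable x)
    (h : ∀ r : ℝ, 0 ≤ r →
      volume {t : ℝ | t ∈ Set.Icc 0 T ∧ ‖x t‖ ≤ r} ≤ ENNReal.ofReal (C * r / Real.sqrt E)) :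
    ∫ t in (0 : ℝ)..T, Real.sqrt E * jap (x t) ^ (-(1 + ε)) ≤ C * (1 + ε) / ε := by
  have hsE : 0 < Real.sqrt E := Real.sqrt_pos.2 (by linarith)
  have hjx : Measurable fun t ↦ jap (x t) := continuous_jap.measurable.comp hx
  have hlevel : ∀ r, 0 ≤ r →
      volume.restrict (Icc 0 T) {t | jap (x t) ≤ r} ≤ ENNReal.ofReal (C / Real.sqrt E * r) := by
    intro r hr
    rw [Measure.restrict_apply' measurableSet_Icc]
    calc _ ≤ volume {t : ℝ | t ∈ Icc 0 T ∧ ‖x t‖ ≤ r} :=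
          measure_mono fun t ht ↦ ⟨ht.2, (norm_le_jap_s10 _).trans ht.1⟩
      _ ≤ _ := (h r hr).trans_eq (by ring_nf)
  have hbound : ∫ t in Icc 0 T, jap (x t) ^ (-(1 + ε)) ≤ C / Real.sqrt E * (1 + ε) / ε := by
    rw [integral_eq_lintegral_of_nonneg_ae
      (ae_of_all _ fun t ↦ (Real.rpow_pos_of_pos (jap_pos _) _).le)
      (hjx.pow_const _).aestronglyMeasurable]
    exact ENNReal.toReal_le_of_le_ofReal (by positivity)
      (lintegral_ofReal_rpow_neg_le hjx.aemeasurable (fun t ↦ one_le_jap_s10 _) (by positivity) hε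
        hlevel)
  rw [intervalIntegral.integral_of_le hT.le, ← integral_Icc_eq_integral_Ioc, integral_const_mul]
  calc Real.sqrt E * ∫ t in Icc 0 T, jap (x t) ^ (-(1 + ε))
      ≤ Real.sqrt E * (C / Real.sqrt E * (1 + ε) / ε) := mul_le_mul_of_nonneg_left hbound hsE.le
    _ = C * (1 + ε) / ε := by field_simp

end
end

section
/- Let ν₁, ν₂ > 0 with ν₁ ≠ ν₂ (anisotropic two-dimensional harmonic oscillator) and let ρ₀ = (x₁⁰, x₂⁰, ξ₁⁰, ξ₂⁰) ∈ ℝ⁴ be nonzero. Define the trajectory x^t = (x₁^t, x₂^t) by x_j^t = cos(ν_j t)·x_j⁰ + sin(ν_j t)·ξ_j⁰/ν_j for j = 1, 2, let p(ρ₀) = (ν₁²(x₁⁰)² + ν₂²(x₂⁰)² + (ξ₁⁰)² + (ξ₂⁰)²)/2, and let γ : ℝ → ℝ, γ(t) = |x^t| = ((x₁^t)² + (x₂^t)²)^{1/2}. Then: (a) γ is Lipschitz with constant √(2·p(ρ₀)); (b) γ is C^∞ on the open set ℝ ∖ {t : γ(t) = 0}; (c) the set S_γ = {t ∈ ℝ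 : γ(t) = 0} ∪ {t ∈ ℝ : γ(t) ≠ 0 and γ'(t) = 0} is locally finite, i.e. S_γ ∩ I is finite for every bounded interval I ⊆ ℝ; (d) for every bounded interval I ⊆ ℝ there exists k ∈ ℕ such that for every s ∈ ℝ, the set {t ∈ I : γ(t) = s} has at most k elements. -/
/-!
Write `x_j(t) = a_j cos (ν_j t) + b_j sin (ν_j t)` with `b_j = ξ_j⁰ / ν_j`, and
`F = γ² = x₁² + x₂²`.
The velocity of `x_j` is bounded by `ν_j √(a_j² + b_j²)`, and `Σ ν_j² (a_j² + b_j²) = 2 p(ρ₀)`,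
which gives (a); `γ = √F` is smooth where `F ≠ 0`, which gives (b).
By the double angle formulas `F'` is a sum of two sinusoids of the distinct frequencies `2ν₁`,
`2ν₂`, hence not identically zero since `ρ₀ ≠ 0`; being analytic, it has finitely many zeros on
each compact interval. Zeros of `γ` (minima of `F ≥ 0`) and its critical points are zeros of
`F'`, which gives (c), and by Rolle's theorem any two points of a level set of `γ` are separated
by a zero of `F'`, which gives (d).
-/

open Real Set Filter

theorem AnalyticOnNhd.finite_inter_zeros_of_isCompact {𝕜 E : Type*} [NontriviallyNormedField 𝕜]
    [NormedAddCommGroup E] [NormedSpace 𝕜 E] {f : 𝕜 → E} {U K : Set 𝕜}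
    (hf : AnalyticOnNhd 𝕜 f U) (hU : IsPreconnected U) (hne : ∃ z ∈ U, f z ≠ 0)
    (hK : IsCompact K) (hKU : K ⊆ U) : (K ∩ {z | f z = 0}).Finite := by
  rcases hf.eqOn_zero_or_eventually_ne_zero_of_preconnected hU with hzero | hcod
  · obtain ⟨z, hz, hfz⟩ := hne
    exact absurd (hzero hz) hfz
  · simpa [sdiff_eq, compl_ofPred] using
      hK.finite_sdiff_of_mem_codiscreteWithin (codiscreteWithin_mono hKU hcod)

theorem Set.finite_and_ncard_le_of_forall_exists_mem_Ioo {T Z : Set ℝ} (hZ : Z.Finite)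
    (h : ∀ a ∈ T, ∀ b ∈ T, a < b → ∃ c ∈ Z, c ∈ Ioo a b) :
    T.Finite ∧ T.ncard ≤ Z.ncard + 1 := by
  -- `a ↦ #(Z ∩ Iio a)` is strictly monotone on `T` with values in `{0, …, #Z}`
  set φ : ℝ → ℕ := fun a => (Z ∩ Iio a).ncard
  have hmono : StrictMonoOn φ T := by
    intro a ha b hb hab
    obtain ⟨c, hcZ, hac, hcb⟩ := h a ha b hb hab
    refine ncard_lt_ncard ?_ (hZ.inter_of_left _)
    refine ssubset_of_subset_not_subset
      (inter_subset_inter_right _ (Iio_subset_Iio hab.le)) fun hsub => ?_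
    exact lt_asymm hac (hsub ⟨hcZ, hcb⟩).2
  have hmaps : MapsTo φ T (Iic Z.ncard) := fun a _ => ncard_inter_le_ncard_left _ _ hZ
  have hfin : T.Finite :=
    Finite.of_finite_image ((finite_Iic _).subset hmaps.image_subset) hmono.injOn
  refine ⟨hfin, ?_⟩
  calc T.ncard ≤ (Iic Z.ncard).ncard :=
        ncard_le_ncard_of_injOn φ hmaps hmono.injOn (finite_Iic _)
    _ = Z.ncard + 1 := by simp

theorem finite_and_ncard_levelSet_le {f f' : ℝ → ℝ} (hf : ∀ t, HasDerivAt f (f' t) t)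
    {A B : ℝ} (hZ : ({t | f' t = 0} ∩ Icc A B).Finite) (c : ℝ) :
    {t | t ∈ Icc A B ∧ f t = c}.Finite ∧
      {t | t ∈ Icc A B ∧ f t = c}.ncard ≤ ({t | f' t = 0} ∩ Icc A B).ncard + 1 := by
  refine finite_and_ncard_le_of_forall_exists_mem_Ioo hZ fun a ha b hb hab => ?_
  obtain ⟨d, hd, hd0⟩ := exists_hasDerivAt_eq_zero hab
    (fun u _ => (hf u).continuousAt.continuousWithinAt) (ha.2.trans hb.2.symm) fun u _ => hf u
  exact ⟨d, ⟨hd0, ha.1.1.trans hd.1.le, hd.2.le.trans hb.1.2⟩, hd⟩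

theorem sqrt_zeros_union_criticalPoints_subset {F F' : ℝ → ℝ} (hF : ∀ t, HasDerivAt F (F' t) t)
    (hF₀ : ∀ t, 0 ≤ F t) :
    {t | √(F t) = 0} ∪ {t | √(F t) ≠ 0 ∧ deriv (fun u => √(F u)) t = 0} ⊆ {t | F' t = 0} := by
  rintro t (hzero | ⟨hne, hcrit⟩)
  · have hmin : IsLocalMin F t := Eventually.of_forall fun u => by
      rw [show F t = 0 from (sqrt_eq_zero (hF₀ t)).1 hzero]
      exact hF₀ u
    exact hmin.hasDerivAt_eq_zero (hF t)
  · have hFt : F t ≠ 0 := fun h => hne (by rw [h, sqrt_zero])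
    rw [((hF t).sqrt hFt).deriv, div_eq_zero_iff] at hcrit
    exact hcrit.resolve_right (by positivity)

theorem abs_sqrt_sq_add_sq_sub_le (a b c d : ℝ) :
    |√(a ^ 2 + b ^ 2) - √(c ^ 2 + d ^ 2)| ≤ √((a - c) ^ 2 + (b - d) ^ 2) := by
  have hnorm : ∀ x y : ℝ, ‖!₂[x, y]‖ = √(x ^ 2 + y ^ 2) := fun x y => by
    simp [EuclideanSpace.norm_eq, Fin.sum_univ_two]
  have hsub : !₂[a, b] - !₂[c, d] = !₂[a - c, b - d] := by
    ext i
    fin_cases i <;> simp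
  rw [← hnorm, ← hnorm, ← hnorm, ← hsub]
  exact abs_norm_sub_norm_le _ _

noncomputable def sinusoid (ω a b t : ℝ) : ℝ := a * cos (ω * t) + b * sin (ω * t)

section Sinusoid

variable (ω a b : ℝ)

@[simp]
lemma sinusoid_zero : sinusoid ω a b 0 = a := by
  simp [sinusoid]

lemma hasDerivAt_sinusoid (t : ℝ) :
    HasDerivAt (sinusoid ω a b) (sinusoid ω (ω * b) (-(ω * a)) t) t := by
  have hω : HasDerivAt (fun u => ω * u) ω t := by simpa using (hasDerivAt_id t).const_mul ω
  have h := (((hasDerivAt_cos _).comp t hω).const_mul a).add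
    (((hasDerivAt_sin _).comp t hω).const_mul b)
  exact h.congr_deriv (by simp only [sinusoid]; ring)

lemma analyticOnNhd_sinusoid (s : Set ℝ) : AnalyticOnNhd ℝ (sinusoid ω a b) s := by
  intro t _
  unfold sinusoid
  fun_prop

lemma contDiff_sinusoid {n : WithTop ℕ∞} : ContDiff ℝ n (sinusoid ω a b) := by
  unfold sinusoid
  fun_prop

lemma sq_sinusoid_le (t : ℝ) : sinusoid ω a b t ^ 2 ≤ a ^ 2 + b ^ 2 := by
  have h := sin_sq_add_cos_sq (ω * t)
  unfold sinusoid
  nlinarith [sq_nonneg (a * sin (ω * t) - b * cos (ω * t))]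

lemma sq_sinusoid_sub_le (s t : ℝ) :
    (sinusoid ω a b s - sinusoid ω a b t) ^ 2 ≤ ω ^ 2 * (a ^ 2 + b ^ 2) * (s - t) ^ 2 := by
  have hbound : ∀ u ∈ univ, ‖sinusoid ω (ω * b) (-(ω * a)) u‖ ≤ √(ω ^ 2 * (a ^ 2 + b ^ 2)) :=
    fun u _ => abs_le_sqrt ((sq_sinusoid_le _ _ _ u).trans_eq (by ring))
  have h := convex_univ.norm_image_sub_le_of_norm_hasDerivWithin_le
    (fun u _ => (hasDerivAt_sinusoid ω a b u).hasDerivWithinAt) hbound (mem_univ t) (mem_univ s)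
  rw [Real.norm_eq_abs, Real.norm_eq_abs] at h
  calc (sinusoid ω a b s - sinusoid ω a b t) ^ 2
      ≤ (√(ω ^ 2 * (a ^ 2 + b ^ 2)) * |s - t|) ^ 2 := by
        rw [← sq_abs]; exact pow_le_pow_left₀ (abs_nonneg _) h 2
    _ = ω ^ 2 * (a ^ 2 + b ^ 2) * (s - t) ^ 2 := by
        rw [mul_pow, sq_sqrt (by positivity), sq_abs]

lemma hasDerivAt_sinusoid_sq (t : ℝ) :
    HasDerivAt (fun u => sinusoid ω a b u ^ 2)
      (sinusoid (2 * ω) (2 * ω * a * b) (ω * (b ^ 2 - a ^ 2)) t) t := by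
  refine ((hasDerivAt_sinusoid ω a b t).pow 2).congr_deriv ?_
  simp only [sinusoid, mul_assoc 2 ω t, cos_two_mul', sin_two_mul]
  ring

end Sinusoid

lemma sinusoid_add_sinusoid_deriv_eq_zero {ω₁ ω₂ a₁ b₁ a₂ b₂ : ℝ}
    (h : ∀ t, sinusoid ω₁ a₁ b₁ t + sinusoid ω₂ a₂ b₂ t = 0) (t : ℝ) :
    sinusoid ω₁ (ω₁ * b₁) (-(ω₁ * a₁)) t + sinusoid ω₂ (ω₂ * b₂) (-(ω₂ * a₂)) t = 0 := by
  have hd := (hasDerivAt_sinusoid ω₁ a₁ b₁ t).add (hasDerivAt_sinusoid ω₂ a₂ b₂ t)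
  rw [show sinusoid ω₁ a₁ b₁ + sinusoid ω₂ a₂ b₂ = fun _ => 0 from funext h] at hd
  exact hd.unique (hasDerivAt_const t 0)

theorem coeffs_eq_zero_of_sinusoid_add_sinusoid_eq_zero {ω₁ ω₂ a₁ b₁ a₂ b₂ : ℝ}
    (hω₁ : ω₁ ≠ 0) (hω₂ : ω₂ ≠ 0) (hω : ω₁ ^ 2 ≠ ω₂ ^ 2)
    (h : ∀ t, sinusoid ω₁ a₁ b₁ t + sinusoid ω₂ a₂ b₂ t = 0) :
    a₁ = 0 ∧ b₁ = 0 ∧ a₂ = 0 ∧ b₂ = 0 := by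
  have h₁ := sinusoid_add_sinusoid_deriv_eq_zero h
  have h₂ := sinusoid_add_sinusoid_deriv_eq_zero h₁
  have h₃ := sinusoid_add_sinusoid_deriv_eq_zero h₂
  have e₀ := h 0
  have e₁ := h₁ 0
  have e₂ := h₂ 0
  have e₃ := h₃ 0
  simp only [sinusoid_zero] at e₀ e₁ e₂ e₃
  have hgap : ω₂ ^ 2 - ω₁ ^ 2 ≠ 0 := sub_ne_zero.2 (Ne.symm hω)
  have ha₁ : a₁ = 0 := by
    have : (ω₂ ^ 2 - ω₁ ^ 2) * a₁ = 0 := by linear_combination ω₂ ^ 2 * e₀ + e₂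
    exact (mul_eq_zero.1 this).resolve_left hgap
  have hb₁ : b₁ = 0 := by
    have : (ω₁ * (ω₂ ^ 2 - ω₁ ^ 2)) * b₁ = 0 := by linear_combination ω₂ ^ 2 * e₁ + e₃
    exact (mul_eq_zero.1 this).resolve_left (mul_ne_zero hω₁ hgap)
  have ha₂ : a₂ = 0 := by linear_combination e₀ - ha₁
  have hb₂ : b₂ = 0 := by
    have : ω₂ * b₂ = 0 := by linear_combination e₁ - ω₁ * hb₁
    exact (mul_eq_zero.1 this).resolve_left hω₂
  exact ⟨ha₁, hb₁, ha₂, hb₂⟩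

noncomputable def radialSq (ν₁ a₁ b₁ ν₂ a₂ b₂ t : ℝ) : ℝ :=
  sinusoid ν₁ a₁ b₁ t ^ 2 + sinusoid ν₂ a₂ b₂ t ^ 2

noncomputable def radialSqDeriv (ν₁ a₁ b₁ ν₂ a₂ b₂ t : ℝ) : ℝ :=
  sinusoid (2 * ν₁) (2 * ν₁ * a₁ * b₁) (ν₁ * (b₁ ^ 2 - a₁ ^ 2)) t +
    sinusoid (2 * ν₂) (2 * ν₂ * a₂ * b₂) (ν₂ * (b₂ ^ 2 - a₂ ^ 2)) t

section RadialSq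

variable (ν₁ a₁ b₁ ν₂ a₂ b₂ : ℝ)

lemma radialSq_nonneg (t : ℝ) : 0 ≤ radialSq ν₁ a₁ b₁ ν₂ a₂ b₂ t := by
  unfold radialSq
  positivity

lemma contDiff_radialSq {n : WithTop ℕ∞} : ContDiff ℝ n (radialSq ν₁ a₁ b₁ ν₂ a₂ b₂) :=
  ((contDiff_sinusoid ν₁ a₁ b₁).pow 2).add ((contDiff_sinusoid ν₂ a₂ b₂).pow 2)

lemma hasDerivAt_radialSq (t : ℝ) :
    HasDerivAt (radialSq ν₁ a₁ b₁ ν₂ a₂ b₂) (radialSqDeriv ν₁ a₁ b₁ ν₂ a₂ b₂ t) t :=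
  (hasDerivAt_sinusoid_sq ν₁ a₁ b₁ t).add (hasDerivAt_sinusoid_sq ν₂ a₂ b₂ t)

lemma abs_sqrt_radialSq_sub_le (s t : ℝ) :
    |√(radialSq ν₁ a₁ b₁ ν₂ a₂ b₂ s) - √(radialSq ν₁ a₁ b₁ ν₂ a₂ b₂ t)| ≤
      √(ν₁ ^ 2 * (a₁ ^ 2 + b₁ ^ 2) + ν₂ ^ 2 * (a₂ ^ 2 + b₂ ^ 2)) * |s - t| := by
  have h₁ := sq_sinusoid_sub_le ν₁ a₁ b₁ s t
  have h₂ := sq_sinusoid_sub_le ν₂ a₂ b₂ s t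
  calc _ ≤ √((sinusoid ν₁ a₁ b₁ s - sinusoid ν₁ a₁ b₁ t) ^ 2 +
        (sinusoid ν₂ a₂ b₂ s - sinusoid ν₂ a₂ b₂ t) ^ 2) := abs_sqrt_sq_add_sq_sub_le _ _ _ _
    _ ≤ √((ν₁ ^ 2 * (a₁ ^ 2 + b₁ ^ 2) + ν₂ ^ 2 * (a₂ ^ 2 + b₂ ^ 2)) * (s - t) ^ 2) :=
        sqrt_le_sqrt (by linarith)
    _ = _ := by rw [sqrt_mul (by positivity), sqrt_sq_eq_abs]

variable {ν₁ a₁ b₁ ν₂ a₂ b₂}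

lemma exists_radialSqDeriv_ne_zero (hν₁ : ν₁ ≠ 0) (hν₂ : ν₂ ≠ 0) (hν : ν₁ ^ 2 ≠ ν₂ ^ 2)
    (hne : ¬(a₁ = 0 ∧ b₁ = 0 ∧ a₂ = 0 ∧ b₂ = 0)) :
    ∃ t, radialSqDeriv ν₁ a₁ b₁ ν₂ a₂ b₂ t ≠ 0 := by
  by_contra! hzero
  obtain ⟨h₁, h₂, h₃, h₄⟩ := coeffs_eq_zero_of_sinusoid_add_sinusoid_eq_zero
    (mul_ne_zero two_ne_zero hν₁) (mul_ne_zero two_ne_zero hν₂)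
    (fun h => hν (by linear_combination h / 4)) hzero
  -- `ν²(a² + b²)² = (ν(b² - a²))² + (2νab)²`
  have hcoeffs : ∀ {ν a b : ℝ}, ν ≠ 0 → 2 * ν * a * b = 0 → ν * (b ^ 2 - a ^ 2) = 0 →
      a = 0 ∧ b = 0 := by
    intro ν a b hν hab hba
    have : ν ^ 2 * (a ^ 2 + b ^ 2) ^ 2 = 0 := by
      linear_combination (ν * (b ^ 2 - a ^ 2)) * hba + (2 * ν * a * b) * hab
    have hsum : a ^ 2 + b ^ 2 = 0 :=
      pow_eq_zero_iff two_ne_zero |>.1 ((mul_eq_zero.1 this).resolve_left (pow_ne_zero 2 hν))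
    constructor <;> nlinarith [sq_nonneg a, sq_nonneg b]
  obtain ⟨ha₁, hb₁⟩ := hcoeffs hν₁ h₁ h₂
  obtain ⟨ha₂, hb₂⟩ := hcoeffs hν₂ h₃ h₄
  exact hne ⟨ha₁, hb₁, ha₂, hb₂⟩

lemma finite_radialSqDeriv_zeros_inter_Icc (hν₁ : ν₁ ≠ 0) (hν₂ : ν₂ ≠ 0) (hν : ν₁ ^ 2 ≠ ν₂ ^ 2)
    (hne : ¬(a₁ = 0 ∧ b₁ = 0 ∧ a₂ = 0 ∧ b₂ = 0)) (A B : ℝ) :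
    ({t | radialSqDeriv ν₁ a₁ b₁ ν₂ a₂ b₂ t = 0} ∩ Icc A B).Finite := by
  obtain ⟨t, ht⟩ := exists_radialSqDeriv_ne_zero hν₁ hν₂ hν hne
  rw [inter_comm]
  exact ((analyticOnNhd_sinusoid _ _ _ univ).add (analyticOnNhd_sinusoid _ _ _ univ)
    ).finite_inter_zeros_of_isCompact isPreconnected_univ ⟨t, mem_univ t, ht⟩ isCompact_Icc
    (subset_univ _)

end RadialSq

/-- Properties of the radial component `γ(t) = |xᵗ|` of a projected trajectory of an
anisotropic two-dimensional harmonic oscillator with frequencies `ν₁ ≠ ν₂` and nonzero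
initial datum `ρ₀ = (x₁⁰, x₂⁰, ξ₁⁰, ξ₂⁰)`:
(a) `γ` is `√(2 p(ρ₀))`-Lipschitz; (b) `γ` is `C^∞` away from its zeros; (c) the set of
zeros of `γ` and critical points of `γ` is locally finite; (d) on every bounded interval
the level sets of `γ` have uniformly bounded cardinality. -/
theorem stmt_13 (ν₁ ν₂ : ℝ) (hν₁ : 0 < ν₁) (hν₂ : 0 < ν₂) (hanis : ν₁ ≠ ν₂)
    (x₁0 x₂0 ξ₁0 ξ₂0 : ℝ)
    (hρ₀ : ¬(x₁0 = 0 ∧ x₂0 = 0 ∧ ξ₁0 = 0 ∧ ξ₂0 = 0))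
    (x₁ x₂ γ : ℝ → ℝ) (p0 : ℝ)
    (hx₁ : ∀ t, x₁ t = Real.cos (ν₁ * t) * x₁0 + Real.sin (ν₁ * t) * ξ₁0 / ν₁)
    (hx₂ : ∀ t, x₂ t = Real.cos (ν₂ * t) * x₂0 + Real.sin (ν₂ * t) * ξ₂0 / ν₂)
    (hγ : ∀ t, γ t = Real.sqrt ((x₁ t) ^ 2 + (x₂ t) ^ 2))
    (hp0 : p0 = (ν₁ ^ 2 * x₁0 ^ 2 + ν₂ ^ 2 * x₂0 ^ 2 + ξ₁0 ^ 2 + ξ₂0 ^ 2) / 2) :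
    (∀ s t : ℝ, |γ s - γ t| ≤ Real.sqrt (2 * p0) * |s - t|) ∧
    ContDiffOn ℝ (⊤ : ℕ∞) γ {t : ℝ | γ t ≠ 0} ∧
    (∀ A B : ℝ,
      (({t : ℝ | γ t = 0} ∪ {t : ℝ | γ t ≠ 0 ∧ deriv γ t = 0}) ∩ Set.Icc A B).Finite) ∧
    (∀ A B : ℝ, ∃ k : ℕ, ∀ s : ℝ,
      ({t : ℝ | t ∈ Set.Icc A B ∧ γ t = s}).Finite ∧
      ({t : ℝ | t ∈ Set.Icc A B ∧ γ t = s}).ncard ≤ k) := by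
  set b₁ := ξ₁0 / ν₁
  set b₂ := ξ₂0 / ν₂
  set F := radialSq ν₁ x₁0 b₁ ν₂ x₂0 b₂
  have hγF : γ = fun t => √(F t) := funext fun t => by
    rw [hγ, hx₁, hx₂]
    simp only [F, radialSq, sinusoid, b₁, b₂]
    ring_nf
  have h2p0 : 2 * p0 = ν₁ ^ 2 * (x₁0 ^ 2 + b₁ ^ 2) + ν₂ ^ 2 * (x₂0 ^ 2 + b₂ ^ 2) := by
    simp only [hp0, b₁, b₂]
    field_simp
    ring
  have hρ : ¬(x₁0 = 0 ∧ b₁ = 0 ∧ x₂0 = 0 ∧ b₂ = 0) := fun ⟨h₁, h₂, h₃, h₄⟩ =>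
    hρ₀ ⟨h₁, h₃, by simpa [b₁, hν₁.ne'] using h₂, by simpa [b₂, hν₂.ne'] using h₄⟩
  have hZ := finite_radialSqDeriv_zeros_inter_Icc hν₁.ne' hν₂.ne'
    ((pow_left_inj₀ hν₁.le hν₂.le two_ne_zero).not.2 hanis) hρ
  have hF := hasDerivAt_radialSq ν₁ x₁0 b₁ ν₂ x₂0 b₂
  have hF₀ := radialSq_nonneg ν₁ x₁0 b₁ ν₂ x₂0 b₂
  subst hγF
  refine ⟨fun s t => ?_, fun t ht => ?_, fun A B => ?_, fun A B => ?_⟩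
  · rw [h2p0]
    exact abs_sqrt_radialSq_sub_le _ _ _ _ _ _ s t
  · exact (((contDiff_radialSq ν₁ x₁0 b₁ ν₂ x₂0 b₂).contDiffAt (x := t)).sqrt
      fun h => ht (by simp [F, h])).contDiffWithinAt
  · exact (hZ A B).subset
      (inter_subset_inter_left _ (sqrt_zeros_union_criticalPoints_subset hF hF₀))
  · have hsub : ∀ s, {t | t ∈ Icc A B ∧ √(F t) = s} ⊆ {t | t ∈ Icc A B ∧ F t = s ^ 2} :=
      fun s t ⟨ht, hs⟩ => ⟨ht, by rw [← hs, sq_sqrt (hF₀ t)]⟩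
    have hlevel := fun s => finite_and_ncard_levelSet_le hF (hZ A B) (s ^ 2)
    exact ⟨_, fun s => ⟨(hlevel s).1.subset (hsub s),
      (ncard_le_ncard (hsub s) (hlevel s).1).trans (hlevel s).2⟩⟩
end
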